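/- arXiv:1603.04960 — 5 statements merged into one kernel-verified Lean document; each statement's English description precedes it below -/
import Mathlib

section
/- Let α, β, c > 0, and let ξ₁, ξ₂, Z be independent real random variables such that ξ₁ has the Gamma(α, c) distribution, ξ₂ has the Gamma(β, c) distribution, and Z has the Beta(α, β) distribution. Then the pair (Z·(ξ₁ + ξ₂), (1 − Z)·(ξ₁ + ξ₂)) has the same joint distribution as (ξ₁, ξ₂). -/
open MeasureTheory ProbabilityTheory

/-- The Gamma distribution with shape `α > 0` and scale `c > 0`: the measure on `ℝ`
with density `x ↦ x^{α−1} exp(−x/c)/(c^α Γ(α))` on `(0, ∞)`. -/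
noncomputable def gammaScaleMeasure (α c : ℝ) : Measure ℝ :=
  (volume.restrict (Set.Ioi (0 : ℝ))).withDensity
    (fun x => ENNReal.ofReal (x ^ (α - 1) * Real.exp (-x / c) / (c ^ α * Real.Gamma α)))

/-- The Beta distribution with parameters `α, β > 0`: the measure on `ℝ` with density
`x ↦ x^{α−1}(1−x)^{β−1}/B(α,β)` on `(0, 1)`, where `B(α,β) = Γ(α)Γ(β)/Γ(α+β)`. -/
noncomputable def betaMeasure (α β : ℝ) : Measure ℝ :=
  (volume.restrict (Set.Ioo (0 : ℝ) 1)).withDensity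
    (fun x => ENNReal.ofReal (x ^ (α - 1) * (1 - x) ^ (β - 1) /
      (Real.Gamma α * Real.Gamma β / Real.Gamma (α + β))))

/-! The map `(z, s) ↦ (z s, (1 - z) s)` sends `(0, 1) × (0, ∞)` injectively onto `(0, ∞)²` with
Jacobian `s`, and the change of variables formula turns the density `b_{α,β}(z) g_{α+β,c}(s)` of
`Beta(α, β) ⊗ Gamma(α + β, c)` into `g_{α,c}(u) g_{β,c}(v)`, the density of
`Gamma(α, c) ⊗ Gamma(β, c)`. Reading off the coordinate `s = u + v` gives
`ξ₁ + ξ₂ ~ Gamma(α + β, c)`; as `Z` is independent of `ξ₁ + ξ₂`, the pair `(Z, ξ₁ + ξ₂)` has law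
`Beta(α, β) ⊗ Gamma(α + β, c)`, whose image under the map is the law of `(ξ₁, ξ₂)`. -/

open Set
open scoped ENNReal

section ChangeOfVariables

variable {E : Type*} [NormedAddCommGroup E] [NormedSpace ℝ E] [FiniteDimensional ℝ E]
  [MeasurableSpace E] [BorelSpace E] (μ : Measure E) [μ.IsAddHaarMeasure]

theorem map_restrict_withDensity_eq_of_abs_det_fderiv_mul {s : Set E} {f : E → E}
    {f' : E → E →L[ℝ] E} {g h : E → ℝ≥0∞} (hs : MeasurableSet s) (hfm : Measurable f)
    (hf' : ∀ x ∈ s, HasFDerivWithinAt f (f' x) s x) (hf : InjOn f s)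
    (hgh : ∀ x ∈ s, ENNReal.ofReal |(f' x).det| * g (f x) = h x) :
    Measure.map f ((μ.restrict s).withDensity h) = (μ.restrict (f '' s)).withDensity g := by
  ext A hA
  rw [Measure.map_apply hfm hA, withDensity_apply _ (hfm hA), withDensity_apply _ hA,
    ← lintegral_indicator (hfm hA), ← lintegral_indicator hA,
    lintegral_image_eq_lintegral_abs_det_fderiv_mul μ hs hf' hf]
  refine setLIntegral_congr_fun hs fun x hx => ?_
  by_cases hxA : f x ∈ A
  · rw [indicator_of_mem hxA, indicator_of_mem (show x ∈ f ⁻¹' A from hxA), hgh x hx]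
  · rw [indicator_of_notMem hxA, indicator_of_notMem (show x ∉ f ⁻¹' A from hxA), mul_zero]

end ChangeOfVariables

theorem prod_restrict_withDensity {X Y : Type*} [MeasurableSpace X] [MeasurableSpace Y]
    {μ : Measure X} {ν : Measure Y} [SFinite μ] [SFinite ν] {s : Set X} {t : Set Y}
    {f : X → ℝ≥0∞} {g : Y → ℝ≥0∞} (hf : Measurable f) (hg : Measurable g) :
    ((μ.restrict s).withDensity f).prod ((ν.restrict t).withDensity g) =
      ((μ.prod ν).restrict (s ×ˢ t)).withDensity (fun p => f p.1 * g p.2) := by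
  rw [prod_withDensity hf hg, Measure.prod_restrict]

noncomputable def splitByFraction (p : ℝ × ℝ) : ℝ × ℝ := (p.1 * p.2, (1 - p.1) * p.2)

theorem measurable_splitByFraction : Measurable splitByFraction := by
  unfold splitByFraction; fun_prop

noncomputable def splitByFractionDeriv (p : ℝ × ℝ) : ℝ × ℝ →L[ℝ] ℝ × ℝ :=
  LinearMap.toContinuousLinearMap (Matrix.toLin (Module.Basis.finTwoProd ℝ)
    (Module.Basis.finTwoProd ℝ) !![p.2, p.1; -p.2, 1 - p.1])

theorem hasFDerivAt_splitByFraction (p : ℝ × ℝ) :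
    HasFDerivAt splitByFraction (splitByFractionDeriv p) p := by
  rw [splitByFractionDeriv, Matrix.toLin_finTwoProd_toContinuousLinearMap]
  refine ((HasFDerivAt.mul (𝕜 := ℝ) (x := p) hasFDerivAt_fst hasFDerivAt_snd).prodMk
    (HasFDerivAt.mul (𝕜 := ℝ) (x := p) ((hasFDerivAt_const 1 p).sub hasFDerivAt_fst)
      hasFDerivAt_snd)).congr_fderiv ?_
  ext <;> simp [mul_comm]

theorem det_splitByFractionDeriv (p : ℝ × ℝ) : (splitByFractionDeriv p).det = p.2 := by
  simp only [splitByFractionDeriv, LinearMap.det_toContinuousLinearMap, LinearMap.det_toLin,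
    Matrix.det_fin_two_of]
  ring

theorem splitByFraction_image :
    splitByFraction '' (Ioo 0 1 ×ˢ Ioi 0) = Ioi 0 ×ˢ Ioi 0 := by
  ext ⟨u, v⟩
  simp only [mem_image, mem_prod, mem_Ioo, mem_Ioi, Prod.exists, splitByFraction,
    Prod.mk.injEq]
  constructor
  · rintro ⟨z, s, ⟨⟨hz0, hz1⟩, hs⟩, rfl, rfl⟩
    exact ⟨mul_pos hz0 hs, mul_pos (sub_pos.2 hz1) hs⟩
  · rintro ⟨hu, hv⟩
    have huv : 0 < u + v := add_pos hu hv
    refine ⟨u / (u + v), u + v, ⟨⟨by positivity, (div_lt_one huv).2 (by linarith)⟩, huv⟩,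
      ?_, ?_⟩
    · field_simp
    · field_simp; ring

theorem injOn_splitByFraction : InjOn splitByFraction (Ioo 0 1 ×ˢ Ioi 0) := by
  rintro ⟨z, s⟩ ⟨-, hs⟩ ⟨z', s'⟩ - h
  simp only [splitByFraction, Prod.mk.injEq] at h
  have hss' : s = s' := by linarith [h.1, h.2]
  subst hss'
  exact Prod.ext (mul_right_cancel₀ (ne_of_gt hs) h.1) rfl

noncomputable def gammaScaleDensity (α c x : ℝ) : ℝ :=
  x ^ (α - 1) * Real.exp (-x / c) / (c ^ α * Real.Gamma α)

noncomputable def betaDensity (α β x : ℝ) : ℝ :=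
  x ^ (α - 1) * (1 - x) ^ (β - 1) / (Real.Gamma α * Real.Gamma β / Real.Gamma (α + β))

theorem gammaScaleDensity_nonneg {α c x : ℝ} (hα : 0 < α) (hc : 0 < c) (hx : 0 ≤ x) :
    0 ≤ gammaScaleDensity α c x := by
  unfold gammaScaleDensity; positivity

theorem betaDensity_nonneg {α β x : ℝ} (hα : 0 < α) (hβ : 0 < β) (hx0 : 0 ≤ x) (hx1 : x ≤ 1) :
    0 ≤ betaDensity α β x := by
  have : 0 ≤ 1 - x := sub_nonneg.2 hx1
  unfold betaDensity; positivity

theorem gammaScaleDensity_split {α β c z s : ℝ} (hα : 0 < α) (hβ : 0 < β) (hc : 0 < c)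
    (hz0 : 0 < z) (hz1 : z < 1) (hs : 0 < s) :
    s * (gammaScaleDensity α c (z * s) * gammaScaleDensity β c ((1 - z) * s)) =
      betaDensity α β z * gammaScaleDensity (α + β) c s := by
  have := Real.Gamma_pos_of_pos hα
  have := Real.Gamma_pos_of_pos hβ
  have := Real.Gamma_pos_of_pos (add_pos hα hβ)
  have := Real.rpow_pos_of_pos hc α
  have := Real.rpow_pos_of_pos hc β
  have hz1' : 0 < 1 - z := sub_pos.2 hz1
  have hexp : Real.exp (-s / c) = Real.exp (-(z * s) / c) * Real.exp (-((1 - z) * s) / c) := by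
    rw [← Real.exp_add]; congr 1; field_simp; ring
  have hpow : s ^ (α + β - 1) = s ^ (α - 1) * s ^ (β - 1) * s := by
    rw [← Real.rpow_add hs, ← Real.rpow_add_one hs.ne']; ring_nf
  simp only [gammaScaleDensity, betaDensity]
  rw [Real.mul_rpow hz0.le hs.le, Real.mul_rpow hz1'.le hs.le, hexp, hpow,
    Real.rpow_add hc α β]
  field_simp

theorem gammaScaleMeasure_prod (α β c : ℝ) :
    (gammaScaleMeasure α c).prod (gammaScaleMeasure β c) =
      (volume.restrict (Ioi 0 ×ˢ Ioi 0)).withDensity fun p =>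
        ENNReal.ofReal (gammaScaleDensity α c p.1) *
          ENNReal.ofReal (gammaScaleDensity β c p.2) := by
  rw [gammaScaleMeasure, gammaScaleMeasure,
    prod_restrict_withDensity (by fun_prop) (by fun_prop), ← Measure.volume_eq_prod]
  rfl

theorem betaMeasure_prod_gammaScaleMeasure (α β c : ℝ) :
    (_root_.betaMeasure α β).prod (gammaScaleMeasure (α + β) c) =
      (volume.restrict (Ioo 0 1 ×ˢ Ioi 0)).withDensity fun p =>
        ENNReal.ofReal (betaDensity α β p.1) *
          ENNReal.ofReal (gammaScaleDensity (α + β) c p.2) := by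
  rw [_root_.betaMeasure, gammaScaleMeasure,
    prod_restrict_withDensity (by fun_prop) (by fun_prop), ← Measure.volume_eq_prod]
  rfl

theorem map_splitByFraction_betaMeasure_prod_gammaScaleMeasure {α β c : ℝ} (hα : 0 < α)
    (hβ : 0 < β) (hc : 0 < c) :
    Measure.map splitByFraction ((_root_.betaMeasure α β).prod (gammaScaleMeasure (α + β) c)) =
      (gammaScaleMeasure α c).prod (gammaScaleMeasure β c) := by
  rw [betaMeasure_prod_gammaScaleMeasure, gammaScaleMeasure_prod, ← splitByFraction_image]
  refine map_restrict_withDensity_eq_of_abs_det_fderiv_mul volume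
    (measurableSet_Ioo.prod measurableSet_Ioi) measurable_splitByFraction
    (fun p _ => (hasFDerivAt_splitByFraction p).hasFDerivWithinAt) injOn_splitByFraction ?_
  rintro ⟨z, s⟩ ⟨⟨hz0, hz1⟩, hs : 0 < s⟩
  rw [det_splitByFractionDeriv, abs_of_pos hs, splitByFraction,
    ← ENNReal.ofReal_mul (gammaScaleDensity_nonneg hα hc (mul_pos hz0 hs).le),
    ← ENNReal.ofReal_mul hs.le, gammaScaleDensity_split hα hβ hc hz0 hz1 hs,
    ENNReal.ofReal_mul (betaDensity_nonneg hα hβ hz0.le hz1.le)]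

theorem betaMeasure_eq_withDensity_betaPDF (α β : ℝ) :
    _root_.betaMeasure α β = volume.withDensity (betaPDF α β) := by
  rw [_root_.betaMeasure, ← withDensity_indicator measurableSet_Ioo]
  congr 1 with x
  by_cases hx : x ∈ Ioo 0 1
  · rw [indicator_of_mem hx, betaPDF_of_pos_lt_one hx.1 hx.2, ProbabilityTheory.beta]
    ring_nf
  · rw [indicator_of_notMem hx, betaPDF_eq, if_neg (show ¬(0 < x ∧ x < 1) from hx),
      ENNReal.ofReal_zero]

theorem isProbabilityMeasure_betaMeasure {α β : ℝ} (hα : 0 < α) (hβ : 0 < β) :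
    IsProbabilityMeasure (_root_.betaMeasure α β) :=
  betaMeasure_eq_withDensity_betaPDF α β ▸ isProbabilityMeasureBeta hα hβ

instance (α c : ℝ) : SigmaFinite (gammaScaleMeasure α c) := by
  unfold gammaScaleMeasure; infer_instance

theorem map_add_gammaScaleMeasure_prod {α β c : ℝ} (hα : 0 < α) (hβ : 0 < β) (hc : 0 < c) :
    Measure.map (fun p : ℝ × ℝ => p.1 + p.2)
        ((gammaScaleMeasure α c).prod (gammaScaleMeasure β c)) =
      gammaScaleMeasure (α + β) c := by
  have := isProbabilityMeasure_betaMeasure hα hβ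
  have hsum : (fun p : ℝ × ℝ => p.1 + p.2) ∘ splitByFraction = Prod.snd := by
    funext p; simp only [Function.comp_apply, splitByFraction]; ring
  rw [← map_splitByFraction_betaMeasure_prod_gammaScaleMeasure hα hβ hc,
    Measure.map_map (by fun_prop) measurable_splitByFraction, hsum, Measure.map_snd_prod,
    measure_univ, one_smul]

/-- If `ξ₁ ~ Gamma(α, c)`, `ξ₂ ~ Gamma(β, c)` and `Z ~ Beta(α, β)` are independent, then
`(Z(ξ₁+ξ₂), (1−Z)(ξ₁+ξ₂))` has the same joint distribution as `(ξ₁, ξ₂)`. -/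
theorem beta_gamma_redistribution {Ω : Type*} [MeasureSpace Ω]
    [IsProbabilityMeasure (ℙ : Measure Ω)]
    (α β c : ℝ) (hα : 0 < α) (hβ : 0 < β) (hc : 0 < c)
    (ξ₁ ξ₂ Z : Ω → ℝ)
    (hm₁ : Measurable ξ₁) (hm₂ : Measurable ξ₂) (hmZ : Measurable Z)
    (hindep : iIndepFun ![ξ₁, ξ₂, Z] ℙ)
    (hd₁ : Measure.map ξ₁ ℙ = gammaScaleMeasure α c)
    (hd₂ : Measure.map ξ₂ ℙ = gammaScaleMeasure β c)
    (hdZ : Measure.map Z ℙ = _root_.betaMeasure α β) :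
    Measure.map (fun a => (Z a * (ξ₁ a + ξ₂ a), (1 - Z a) * (ξ₁ a + ξ₂ a))) ℙ
      = Measure.map (fun a => (ξ₁ a, ξ₂ a)) ℙ := by
  have hpair : Measure.map (fun a => (ξ₁ a, ξ₂ a)) ℙ =
      (gammaScaleMeasure α c).prod (gammaScaleMeasure β c) := by
    rw [← hd₁, ← hd₂, ← indepFun_iff_map_prod_eq_prod_map_map hm₁.aemeasurable hm₂.aemeasurable]
    exact hindep.indepFun (show (0 : Fin 3) ≠ 1 by decide)
  have hsum : Measure.map (fun a => ξ₁ a + ξ₂ a) ℙ = gammaScaleMeasure (α + β) c := by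
    rw [← map_add_gammaScaleMeasure_prod hα hβ hc, ← hpair,
      Measure.map_map (by fun_prop) (hm₁.prodMk hm₂)]
    rfl
  have hZ_sum : IndepFun Z (fun a => ξ₁ a + ξ₂ a) ℙ := by
    have hmeas : ∀ i, Measurable (![ξ₁, ξ₂, Z] i) := fun i => by fin_cases i <;> assumption
    exact ((hindep.indepFun_prodMk hmeas 0 1 2 (by decide) (by decide)).comp
      (measurable_fst.add measurable_snd) measurable_id).symm
  have hlaw : Measure.map (fun a => (Z a, ξ₁ a + ξ₂ a)) ℙ =
      (_root_.betaMeasure α β).prod (gammaScaleMeasure (α + β) c) := by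
    rw [← hdZ, ← hsum]
    exact (indepFun_iff_map_prod_eq_prod_map_map hmZ.aemeasurable (by fun_prop)).1 hZ_sum
  rw [hpair, ← map_splitByFraction_betaMeasure_prod_gammaScaleMeasure hα hβ hc, ← hlaw,
    Measure.map_map measurable_splitByFraction
      (by fun_prop : Measurable fun a => (Z a, ξ₁ a + ξ₂ a))]
  rfl
end

section
/- Let a, b > 0 be real numbers, let n, m be natural numbers, and let x, y ≥ 0 be real numbers. Then ∫₀¹ (1/B(a,b)) · p^{a−1}(1−p)^{b−1} · (p(x+y))^n · ((1−p)(x+y))^m / (Γ(n+a)·Γ(m+b)) dp = Σ_{k=0}^{n+m} C(n+m, k) · (B(k+a, n+m−k+b)/B(a,b)) · x^k y^{n+m−k} / (Γ(k+a)·Γ(n+m−k+b)), where C(n+m,k) is the binomial coefficient. (This is the single-edge duality identity: the expectation of the duality function after a Beta(a,b) energy redistribution equals the beta-binomial average of duality functions over particle redistributions.) -/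
/-!
The Beta moment `∫₀¹ p^(a-1) (1-p)^(b-1) p^n (1-p)^m dp = B(n+a, m+b)` turns the left side into
`(x+y)^(n+m) B(n+a, m+b) / (B(a,b) Γ(n+a) Γ(m+b)) = (x+y)^(n+m) / (B(a,b) Γ(n+m+a+b))`.
On the right, `k + a` and `(n+m-k) + b` also add up to `n+m+a+b`, so each term is
`C(n+m,k) x^k y^(n+m-k) / (B(a,b) Γ(n+m+a+b))`, and the binomial theorem finishes the proof.
-/

open Real

/-- The Beta function `B(a, b) = Γ(a)Γ(b)/Γ(a+b)`. -/
noncomputable def betaFn (a b : ℝ) : ℝ := Real.Gamma a * Real.Gamma b / Real.Gamma (a + b)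

open MeasureTheory

theorem integral_rpow_mul_one_sub_rpow_eq_betaFn {u v : ℝ} (hu : 0 < u) (hv : 0 < v) :
    ∫ p in Set.Ioo (0 : ℝ) 1, p ^ (u - 1) * (1 - p) ^ (v - 1) = betaFn u v := by
  have hint := Complex.betaIntegral_convergent (u := u) (v := v) (by simpa) (by simpa)
  rw [intervalIntegrable_iff_integrableOn_Ioc_of_le zero_le_one] at hint
  rw [show betaFn u v = ProbabilityTheory.beta u v from rfl,
    ProbabilityTheory.beta_eq_betaIntegralReal u v hu hv, Complex.betaIntegral,
    intervalIntegral.integral_of_le zero_le_one, ← integral_Ioc_eq_integral_Ioo,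
    ← RCLike.re_to_complex, ← integral_re hint]
  refine setIntegral_congr_fun measurableSet_Ioc fun p ⟨hp0, hp1⟩ => ?_
  rw [RCLike.re_to_complex, ← Complex.ofReal_re (p ^ (u - 1) * (1 - p) ^ (v - 1))]
  push_cast [Complex.ofReal_cpow hp0.le, Complex.ofReal_cpow (sub_nonneg.2 hp1)]
  rfl

theorem integral_rpow_mul_one_sub_rpow_mul_pow_mul_one_sub_pow {a b : ℝ} (ha : 0 < a) (hb : 0 < b)
    (n m : ℕ) :
    ∫ p in Set.Ioo (0 : ℝ) 1, p ^ (a - 1) * (1 - p) ^ (b - 1) * (p ^ n * (1 - p) ^ m) =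
      betaFn (n + a) (m + b) := by
  rw [← integral_rpow_mul_one_sub_rpow_eq_betaFn (by positivity) (by positivity)]
  refine setIntegral_congr_fun measurableSet_Ioo fun p ⟨hp0, hp1⟩ => ?_
  rw [add_sub_assoc, add_sub_assoc, add_comm (n : ℝ), add_comm (m : ℝ),
    rpow_add_natCast hp0.ne', rpow_add_natCast (sub_pos.2 hp1).ne']
  ring

theorem single_edge_duality_general (a b : ℝ) (ha : 0 < a) (hb : 0 < b) (n m : ℕ)
    (x y : ℝ) :
    ∫ p in Set.Ioo (0 : ℝ) 1,
        (1 / betaFn a b) * p ^ (a - 1) * (1 - p) ^ (b - 1) *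
          ((p * (x + y)) ^ n * ((1 - p) * (x + y)) ^ m /
            (Real.Gamma (n + a) * Real.Gamma (m + b)))
      = ∑ k ∈ Finset.range (n + m + 1),
          ((n + m).choose k : ℝ) * (betaFn (k + a) ((n + m - k : ℕ) + b) / betaFn a b) *
            (x ^ k * y ^ (n + m - k) /
              (Real.Gamma (k + a) * Real.Gamma ((n + m - k : ℕ) + b))) := by
  have hΓ {s : ℝ} (hs : 0 < s) : Gamma s ≠ 0 := (Gamma_pos_of_pos hs).ne'
  have hB : betaFn a b ≠ 0 := (ProbabilityTheory.beta_pos ha hb).ne'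
  calc _ = (x + y) ^ (n + m) / (betaFn a b * (Gamma (n + a) * Gamma (m + b))) *
        ∫ p in Set.Ioo (0 : ℝ) 1, p ^ (a - 1) * (1 - p) ^ (b - 1) * (p ^ n * (1 - p) ^ m) := by
        rw [← integral_const_mul]
        congr 1 with p
        rw [mul_pow, mul_pow, pow_add]
        field_simp
    _ = (x + y) ^ (n + m) / (betaFn a b * Gamma ((n + m : ℕ) + a + b)) := by
        rw [integral_rpow_mul_one_sub_rpow_mul_pow_mul_one_sub_pow ha hb, betaFn.eq_1 (n + a),
          show (n : ℝ) + a + (m + b) = (n + m : ℕ) + a + b by push_cast; ring]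
        have := hΓ (s := n + a) (by positivity)
        have := hΓ (s := m + b) (by positivity)
        have := hΓ (s := (n + m : ℕ) + a + b) (by positivity)
        field_simp
    _ = _ := by
        rw [add_pow, Finset.sum_div]
        refine Finset.sum_congr rfl fun k hk => ?_
        have hkN : k ≤ n + m := Nat.lt_succ_iff.mp (Finset.mem_range.mp hk)
        rw [betaFn.eq_1 (k + a), show (k + a) + ((n + m - k : ℕ) + b) = (n + m : ℕ) + a + b by
          push_cast [Nat.cast_sub hkN]; ring]
        have := hΓ (s := k + a) (by positivity)
        have := hΓ (s := (n + m - k : ℕ) + b) (by positivity)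
        have := hΓ (s := (n + m : ℕ) + a + b) (by positivity)
        field_simp

/-- The single-edge duality identity: the expectation of the duality function after a
`Beta(a,b)` energy redistribution equals the beta-binomial average of duality functions
over particle redistributions. -/
theorem single_edge_duality (a b : ℝ) (ha : 0 < a) (hb : 0 < b) (n m : ℕ)
    (x y : ℝ) (hx : 0 ≤ x) (hy : 0 ≤ y) :
    ∫ p in Set.Ioo (0 : ℝ) 1,
        (1 / betaFn a b) * p ^ (a - 1) * (1 - p) ^ (b - 1) *
          ((p * (x + y)) ^ n * ((1 - p) * (x + y)) ^ m /
            (Real.Gamma (n + a) * Real.Gamma (m + b)))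
      = ∑ k ∈ Finset.range (n + m + 1),
          ((n + m).choose k : ℝ) * (betaFn (k + a) ((n + m - k : ℕ) + b) / betaFn a b) *
            (x ^ k * y ^ (n + m - k) /
              (Real.Gamma (k + a) * Real.Gamma ((n + m - k : ℕ) + b))) :=
  single_edge_duality_general a b ha hb n m x y
end

section
/- Let K ≥ 1 be an integer and let κ : [0,1] → {p ∈ ℝ^K : p_i ≥ 0 for all i, Σ_{i=1}^K p_i = 1} be continuous. On a probability space, for each integer L ≥ 1 let (ω^{(L)}_v)_{v=0,…,L} be random variables with values in {1, …, K} such that the whole family (over all L and v) is independent and ℙ(ω^{(L)}_v = i) = κ_i(v/L). Define ψ^{(L)}(m) = (ω^{(L)}_{m−1} + ω^{(L)}_m)/(ω^{(L)}_{m−1} · ω^{(L)}_m) for 1 ≤ m ≤ L, and 𝒜^{(L)}(x) = (Σ_{m=1}^{⌊xL⌋} ψ^{(L)}(m)) / (Σ_{m=1}^{L} ψ^{(L)}(m)) for x ∈ [0,1]. Then for every x ∈ [0,1], almost surely lim_{L→∞} 𝒜^{(L)}(x) = (Σ_{i=1}^K (1/i) ∫₀^x κ_i(y) dy) / (Σ_{i=1}^K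 (1/i) ∫₀^1 κ_i(y) dy). -/
/-!
Since `ψ(m) = 1/ω_{m-1} + 1/ω_m`, the partial sums of `ψ` are, up to two boundary terms, twice
the partial sums of the independent variables `1/ω^{(L)}_v ∈ [0, 1]`, whose means are
`meanInv κ (v/L) = Σ_i κ_i(v/L)/i`. By Hoeffding's inequality a row of length `L` deviates from
its mean by `εL` with probability exponentially small in `L`, so by Borel–Cantelli the sums,
divided by `L`, follow their means almost surely; the means are Riemann sums of `meanInv κ`.
The factor `2` and the normalization `1/L` cancel in the ratio.
-/

open MeasureTheory ProbabilityTheory Filter Topology Finset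
open scoped NNReal ENNReal

namespace ProbabilityTheory.HasSubgaussianMGF

variable {Ω : Type*} [MeasurableSpace Ω] {μ : Measure Ω} {X : Ω → ℝ} {c : ℝ≥0}

lemma mono (h : HasSubgaussianMGF X c μ) {c' : ℝ≥0} (hc : c ≤ c') :
    HasSubgaussianMGF X c' μ where
  integrable_exp_mul := h.integrable_exp_mul
  mgf_le t := (h.mgf_le t).trans <| Real.exp_le_exp.mpr <| by gcongr

lemma measureReal_abs_ge_le [IsFiniteMeasure μ] (h : HasSubgaussianMGF X c μ) {ε : ℝ}
    (hε : 0 ≤ ε) : μ.real {ω | ε ≤ |X ω|} ≤ 2 * Real.exp (-ε ^ 2 / (2 * c)) := by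
  have hsplit : {ω | ε ≤ |X ω|} ⊆ {ω | ε ≤ X ω} ∪ {ω | ε ≤ (-X) ω} :=
    fun ω (hω : ε ≤ |X ω|) => le_abs.mp hω
  calc μ.real {ω | ε ≤ |X ω|} ≤ μ.real {ω | ε ≤ X ω} + μ.real {ω | ε ≤ (-X) ω} :=
        (measureReal_mono hsplit).trans (measureReal_union_le _ _)
    _ ≤ _ := by linarith [h.measure_ge_le hε, h.neg.measure_ge_le hε]

end ProbabilityTheory.HasSubgaussianMGF

section StrongLaw

variable {Ω : Type*} [MeasurableSpace Ω] {μ : Measure Ω}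

lemma ae_tendsto_zero_of_tsum_measure_abs_ge_ne_top {X : ℕ → Ω → ℝ}
    (h : ∀ ε > 0, ∑' n, μ {ω | ε ≤ |X n ω|} ≠ ∞) :
    ∀ᵐ ω ∂μ, Tendsto (fun n => X n ω) atTop (𝓝 0) := by
  have hk : ∀ᵐ ω ∂μ, ∀ k : ℕ, ∀ᶠ n in atTop, |X n ω| < 1 / (k + 1) :=
    ae_all_iff.mpr fun k => by
      filter_upwards [ae_eventually_notMem (h _ Nat.one_div_pos_of_nat)] with ω hω
      filter_upwards [hω] with n hn
      simpa using hn
  filter_upwards [hk] with ω hω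
  refine Metric.tendsto_nhds.mpr fun ε hε => ?_
  obtain ⟨k, hk⟩ := exists_nat_one_div_lt hε
  filter_upwards [hω k] with n hn
  rw [Real.dist_0_eq_abs]
  exact hn.trans hk

theorem ae_tendsto_sum_div_of_iIndepFun [IsProbabilityMeasure μ] {Y : ℕ → ℕ → Ω → ℝ}
    {c : ℝ≥0} (hY : ∀ L v, HasSubgaussianMGF (Y L v) c μ) (hindep : ∀ L, iIndepFun (Y L) μ)
    {s : ℕ → Finset ℕ} (hs : ∀ L, #(s L) ≤ L + 1) :
    ∀ᵐ ω ∂μ, Tendsto (fun L : ℕ => (∑ v ∈ s L, Y L v ω) / L) atTop (𝓝 0) := by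
  refine ae_tendsto_zero_of_tsum_measure_abs_ge_ne_top fun ε hε => ?_
  set r : ℝ := -ε ^ 2 / (4 * (c + 1))
  have hr : r < 0 := div_neg_of_neg_of_pos (by nlinarith) (by positivity)
  have hbound : ∀ L : ℕ, μ {ω | ε ≤ |(∑ v ∈ s L, Y L v ω) / L|}
      ≤ ENNReal.ofReal (2 * Real.exp (L * r)) := by
    intro L
    rcases Nat.eq_zero_or_pos L with rfl | hL
    · simp [not_le.mpr hε]
    have hLpos : (0 : ℝ) < L := Nat.cast_pos.mpr hL
    -- `c + 1` rather than `c`: for a zero proxy the Chernoff bound `exp (-ε² / 0) = 1` is junk.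
    have hsub : HasSubgaussianMGF (fun ω => ∑ v ∈ s L, Y L v ω) (2 * L * (c + 1)) μ := by
      refine (HasSubgaussianMGF.sum_of_iIndepFun (hindep L) fun v _ => hY L v).mono ?_
      rw [sum_const, nsmul_eq_mul]
      have hcard : (#(s L) : ℝ≥0) ≤ 2 * L := by exact_mod_cast (hs L).trans (by omega)
      exact mul_le_mul' hcard le_self_add
    have hset : {ω | ε ≤ |(∑ v ∈ s L, Y L v ω) / L|}
        = {ω | ε * L ≤ |∑ v ∈ s L, Y L v ω|} := by
      ext ω
      simp [abs_div, le_div_iff₀ hLpos]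
    rw [hset, ← ofReal_measureReal]
    refine ENNReal.ofReal_le_ofReal ((hsub.measureReal_abs_ge_le (by positivity)).trans_eq ?_)
    push_cast
    congr 2
    simp only [r]
    field_simp
    ring
  refine ne_top_of_le_ne_top ?_ (ENNReal.tsum_le_tsum hbound)
  exact ((Real.summable_exp_nat_mul_iff.mpr hr).mul_left 2).tsum_ofReal_ne_top

end StrongLaw

section RiemannSum

variable {g : ℝ → ℝ} {η : ℝ}

lemma abs_integral_le_mul_sub {M a b : ℝ} (hab : a ≤ b) (hM : ∀ y ∈ Set.Icc a b, |g y| ≤ M) :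
    |∫ y in a..b, g y| ≤ M * (b - a) := by
  have := intervalIntegral.norm_integral_le_of_norm_le_const (f := g) fun y hy => by
    rw [Set.uIoc_of_le hab] at hy
    exact hM y (Set.Ioc_subset_Icc_self hy)
  rwa [Real.norm_eq_abs, abs_of_nonneg (sub_nonneg.mpr hab)] at this

lemma abs_sub_mul_sub_integral_le {a b : ℝ} (hab : a ≤ b)
    (hg : IntervalIntegrable g volume a b) (hη : ∀ y ∈ Set.Icc a b, |g a - g y| ≤ η) :
    |(b - a) * g a - ∫ y in a..b, g y| ≤ η * (b - a) := by
  have hdiff : (b - a) * g a - ∫ y in a..b, g y = ∫ y in a..b, (g a - g y) := by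
    rw [intervalIntegral.integral_sub intervalIntegrable_const hg,
      intervalIntegral.integral_const, smul_eq_mul]
  rw [hdiff]
  exact abs_integral_le_mul_sub (g := fun y => g a - g y) hab hη

lemma abs_sum_sub_mul_sub_integral_le {a : ℕ → ℝ} (ha : Monotone a) {n : ℕ}
    (hg : ∀ k < n, IntervalIntegrable g volume (a k) (a (k + 1)))
    (hη : ∀ k < n, ∀ y ∈ Set.Icc (a k) (a (k + 1)), |g (a k) - g y| ≤ η) :
    |∑ k ∈ range n, (a (k + 1) - a k) * g (a k) - ∫ y in a 0..a n, g y| ≤ η * (a n - a 0) := by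
  rw [← intervalIntegral.sum_integral_adjacent_intervals hg, ← sum_sub_distrib,
    ← sum_range_sub, mul_sum]
  refine (abs_sum_le_sum_abs _ _).trans (sum_le_sum fun k hk => ?_)
  have hk := mem_range.mp hk
  exact abs_sub_mul_sub_integral_le (ha k.le_succ) (hg k hk) (hη k hk)

lemma natFloor_mul_div_mem_Icc {c : ℝ} (hc : 0 ≤ c) {L : ℕ} (hL : 0 < L) :
    (⌊c * L⌋₊ / L : ℝ) ∈ Set.Icc (c - 1 / L) c := by
  have hLpos : (0 : ℝ) < L := Nat.cast_pos.mpr hL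
  have := Nat.lt_floor_add_one (c * L)
  constructor
  · rw [sub_le_iff_le_add, ← add_div, le_div_iff₀ hLpos]
    linarith
  · exact (div_le_iff₀ hLpos).mpr (Nat.floor_le (by positivity))

lemma abs_sum_div_sub_integral_le (hg : ContinuousOn g (Set.Icc 0 1)) {M : ℝ}
    (hM : ∀ y ∈ Set.Icc (0 : ℝ) 1, |g y| ≤ M) {L : ℕ} (hL : 0 < L)
    (hη : ∀ u ∈ Set.Icc (0 : ℝ) 1, ∀ y ∈ Set.Icc (0 : ℝ) 1, |u - y| ≤ 1 / L → |g u - g y| ≤ η)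
    {c : ℝ} (hc : c ∈ Set.Icc (0 : ℝ) 1) :
    |(∑ v ∈ range (⌊c * L⌋₊ + 1), g (v / L)) / L - ∫ y in 0..c, g y| ≤ η + 2 * M / L := by
  set n := ⌊c * L⌋₊
  set a : ℕ → ℝ := fun k => k / L
  have hLpos : (0 : ℝ) < L := Nat.cast_pos.mpr hL
  have hmono : Monotone a := fun k l hkl => by dsimp [a]; gcongr
  have hstep : ∀ k, a (k + 1) - a k = 1 / L := fun k => by simp only [a]; push_cast; ring
  obtain ⟨hcn, hnc⟩ := natFloor_mul_div_mem_Icc hc.1 hL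
  have hmem : ∀ k ≤ n, a k ∈ Set.Icc (0 : ℝ) 1 := fun k hk =>
    ⟨by positivity, (hmono hk).trans (hnc.trans hc.2)⟩
  have hint : ∀ {u v}, u ∈ Set.Icc (0 : ℝ) 1 → v ∈ Set.Icc (0 : ℝ) 1 →
      IntervalIntegrable g volume u v := fun hu hv =>
    (hg.mono (Set.uIcc_subset_Icc hu hv)).intervalIntegrable
  have hη0 : 0 ≤ η := by
    simpa using hη 0 (by simp) 0 (by simp) (by rw [sub_self, abs_zero]; positivity)
  have hcells : |∑ k ∈ range n, (a (k + 1) - a k) * g (a k) - ∫ y in a 0..a n, g y| ≤ η := by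
    refine (abs_sum_sub_mul_sub_integral_le hmono (fun k hk => hint (hmem k hk.le) (hmem _ hk))
      fun k hk y hy => hη _ (hmem k hk.le) y ⟨(hmem k hk.le).1.trans hy.1,
        hy.2.trans (hmem _ hk).2⟩ ?_).trans ?_
    · rw [abs_sub_comm, abs_of_nonneg (by linarith [hy.1]), ← hstep k]
      linarith [hy.2]
    · exact mul_le_of_le_one_right hη0 (by simpa [a] using (hmem n le_rfl).2)
  have hlast : |g (a n) / L| ≤ M / L := by
    rw [abs_div, Nat.abs_cast]
    exact div_le_div_of_nonneg_right (hM _ (hmem n le_rfl)) hLpos.le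
  have htail : |∫ y in a n..c, g y| ≤ M / L := by
    have hM0 : 0 ≤ M := (abs_nonneg _).trans (hM 0 (by simp))
    calc _ ≤ M * (c - a n) := abs_integral_le_mul_sub hnc fun y hy =>
          hM y ⟨(hmem n le_rfl).1.trans hy.1, hy.2.trans hc.2⟩
      _ ≤ M * (1 / L) := by gcongr; linarith
      _ = M / L := by ring
  have hsplit : (∑ v ∈ range (n + 1), g (v / L)) / L - ∫ y in 0..c, g y
      = (∑ k ∈ range n, (a (k + 1) - a k) * g (a k) - ∫ y in a 0..a n, g y)
        + g (a n) / L - ∫ y in a n..c, g y := by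
    rw [← intervalIntegral.integral_add_adjacent_intervals (b := a n)
      (hint (by simp) (hmem n le_rfl)) (hint (hmem n le_rfl) hc), sum_range_succ, add_div, sum_div]
    simp only [hstep, one_div_mul_eq_div]
    simp only [a, Nat.cast_zero, zero_div]
    ring
  rw [hsplit, abs_le]
  obtain ⟨h₁, h₂⟩ := abs_le.mp hcells
  obtain ⟨h₃, h₄⟩ := abs_le.mp hlast
  obtain ⟨h₅, h₆⟩ := abs_le.mp htail
  have hM2 : 2 * M / L = M / L + M / L := by ring
  constructor <;> linarith

theorem tendsto_sum_div_integral (hg : ContinuousOn g (Set.Icc 0 1)) {c : ℝ}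
    (hc : c ∈ Set.Icc (0 : ℝ) 1) :
    Tendsto (fun L : ℕ => (∑ v ∈ range (⌊c * L⌋₊ + 1), g (v / L)) / L) atTop
      (𝓝 (∫ y in 0..c, g y)) := by
  obtain ⟨M, hM⟩ := isCompact_Icc.exists_bound_of_continuousOn hg
  refine Metric.tendsto_nhds.mpr fun ε hε => ?_
  obtain ⟨δ, hδ, hunif⟩ := Metric.uniformContinuousOn_iff_le.mp
    (isCompact_Icc.uniformContinuousOn_of_continuous hg) (ε / 2) (half_pos hε)
  have hsmall : ∀ C r : ℝ, 0 < r → ∀ᶠ L : ℕ in atTop, C / L < r := fun C r hr =>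
    (tendsto_const_div_atTop_nhds_zero_nat C).eventually (gt_mem_nhds hr)
  filter_upwards [hsmall 1 δ hδ, hsmall (2 * M) (ε / 2) (half_pos hε),
    eventually_gt_atTop 0] with L hLδ hLM hL
  rw [Real.dist_eq]
  refine (abs_sum_div_sub_integral_le hg (fun y hy => by simpa using hM y hy) hL
    (fun u hu y hy huy => hunif u hu y hy (by rw [Real.dist_eq]; linarith)) hc).trans_lt ?_
  linarith

end RiemannSum

lemma sum_Icc_pred_add (y : ℕ → ℝ) (n : ℕ) :
    ∑ m ∈ Icc 1 n, (y (m - 1) + y m) = 2 * ∑ v ∈ range (n + 1), y v - y 0 - y n := by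
  induction n with
  | zero =>
    rw [zero_add, sum_range_one, Icc_eq_empty_of_lt zero_lt_one, sum_empty]
    ring
  | succ n ih =>
    rw [sum_Icc_succ_top (by omega), ih, sum_range_succ _ (n + 1), Nat.add_sub_cancel]
    ring

lemma tendsto_sum_Icc_pred_add_div {y : ℕ → ℕ → ℝ} {C : ℝ} (hy : ∀ L v, |y L v| ≤ C)
    {n : ℕ → ℕ} {I : ℝ}
    (h : Tendsto (fun L : ℕ => (∑ v ∈ range (n L + 1), y L v) / L) atTop (𝓝 I)) :
    Tendsto (fun L : ℕ => (∑ m ∈ Icc 1 (n L), (y L (m - 1) + y L m)) / L) atTop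
      (𝓝 (2 * I)) := by
  have hends : Tendsto (fun L : ℕ => (y L 0 + y L (n L)) / L) atTop (𝓝 0) := by
    refine squeeze_zero_norm (fun L => ?_) (tendsto_const_div_atTop_nhds_zero_nat (2 * C))
    rw [Real.norm_eq_abs, abs_div, Nat.abs_cast]
    gcongr
    linarith [abs_add_le (y L 0) (y L (n L)), hy L 0, hy L (n L)]
  convert (h.const_mul 2).sub hends using 2 with L
  · rw [sum_Icc_pred_add]
    ring
  · ring

lemma integral_comp_eq_sum_measureReal {Ω α : Type*} [MeasurableSpace Ω] [MeasurableSpace α]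
    [MeasurableSingletonClass α] {μ : Measure Ω} [IsFiniteMeasure μ] {W : Ω → α}
    (hW : Measurable W) {s : Finset α} (hs : ∀ ω, W ω ∈ s) (f : α → ℝ) :
    ∫ ω, f (W ω) ∂μ = ∑ k ∈ s, μ.real {ω | W ω = k} * f k := by
  have hset : ∀ k, MeasurableSet {ω | W ω = k} := fun k => hW (measurableSet_singleton k)
  calc ∫ ω, f (W ω) ∂μ = ∫ ω, ∑ k ∈ s, {ω | W ω = k}.indicator (fun _ => f k) ω ∂μ := by
        congr with ω
        classical
        simp [Set.indicator_apply, hs ω]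
    _ = ∑ k ∈ s, μ.real {ω | W ω = k} * f k := by
        rw [integral_finsetSum _ fun k _ => (integrable_const _).indicator (hset k)]
        simp_rw [integral_indicator_const _ (hset _), smul_eq_mul]

section ProfileFunctional

variable {K : ℕ} {κ : Fin K → ℝ → ℝ}

noncomputable def meanInv (κ : Fin K → ℝ → ℝ) (y : ℝ) : ℝ :=
  ∑ j : Fin K, 1 / ((j : ℝ) + 1) * κ j y

lemma continuousOn_meanInv {s : Set ℝ} (hκ : ∀ j, ContinuousOn (κ j) s) :
    ContinuousOn (meanInv κ) s :=
  continuousOn_finsetSum _ fun j _ => continuousOn_const.mul (hκ j)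

lemma integral_meanInv {c : ℝ} (hκ : ∀ j, IntervalIntegrable (κ j) volume 0 c) :
    ∫ y in 0..c, meanInv κ y = ∑ j : Fin K, 1 / ((j : ℝ) + 1) * ∫ y in 0..c, κ j y := by
  simp only [meanInv]
  rw [intervalIntegral.integral_finsetSum fun j _ => (hκ j).const_mul _]
  simp_rw [intervalIntegral.integral_const_mul]

lemma meanInv_pos {y : ℝ} (hκnonneg : ∀ j, 0 ≤ κ j y) (hκsum : ∑ j : Fin K, κ j y = 1) :
    0 < meanInv κ y := by
  obtain ⟨j, -, hj⟩ : ∃ j ∈ univ, 0 < κ j y := by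
    by_contra! h
    linarith [sum_nonpos h]
  exact sum_pos' (fun i _ => by have := hκnonneg i; positivity) ⟨j, mem_univ j, by positivity⟩

lemma integral_inv_eq_meanInv {Ω : Type*} [MeasurableSpace Ω] {μ : Measure Ω}
    [IsFiniteMeasure μ] {W : Ω → ℕ} (hW : Measurable W) (hval : ∀ a, W a ∈ Icc 1 K) {y : ℝ}
    (hdist : ∀ j : Fin K, μ {a | W a = (j : ℕ) + 1} = ENNReal.ofReal (κ j y))
    (hκnonneg : ∀ j, 0 ≤ κ j y) :
    ∫ a, (W a : ℝ)⁻¹ ∂μ = meanInv κ y := by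
  let shift : Fin K ↪ ℕ := ⟨fun j => j + 1, fun i j h => Fin.ext (by simpa using h)⟩
  have hmem : ∀ a, W a ∈ univ.map shift := fun a => by
    have := mem_Icc.mp (hval a)
    exact mem_map.mpr ⟨⟨W a - 1, by omega⟩, mem_univ _, show W a - 1 + 1 = W a by omega⟩
  rw [integral_comp_eq_sum_measureReal (f := fun k : ℕ => (k : ℝ)⁻¹) hW hmem, sum_map, meanInv]
  refine sum_congr rfl fun j _ => ?_
  change μ.real {a | W a = (j : ℕ) + 1} * (((j + 1 : ℕ) : ℝ))⁻¹ = _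
  rw [measureReal_def, hdist, ENNReal.toReal_ofReal (hκnonneg j)]
  push_cast
  ring

variable {Ω : Type*} [MeasurableSpace Ω] {μ : Measure Ω} [IsProbabilityMeasure μ]
  {ω : ℕ → ℕ → Ω → ℕ}

theorem ae_tendsto_sum_inv_div (hκcont : ∀ j, ContinuousOn (κ j) (Set.Icc 0 1))
    (hκnonneg : ∀ j, ∀ y ∈ Set.Icc (0 : ℝ) 1, 0 ≤ κ j y)
    (hmeas : ∀ L v, Measurable (ω L v)) (hval : ∀ L v a, ω L v a ∈ Icc 1 K)
    (hindep : ∀ L, iIndepFun (ω L) μ)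
    (hdist : ∀ L, 1 ≤ L → ∀ v, v ≤ L → ∀ j : Fin K,
      μ {a | ω L v a = (j : ℕ) + 1} = ENNReal.ofReal (κ j (v / L)))
    {c : ℝ} (hc : c ∈ Set.Icc (0 : ℝ) 1) :
    ∀ᵐ a ∂μ, Tendsto (fun L : ℕ => (∑ v ∈ range (⌊c * L⌋₊ + 1), (ω L v a : ℝ)⁻¹) / L) atTop
      (𝓝 (∫ y in 0..c, meanInv κ y)) := by
  have hinv : ∀ L v, Measurable fun a => (ω L v a : ℝ)⁻¹ := fun L v =>
    (measurable_from_top (f := fun k : ℕ => (k : ℝ)⁻¹)).comp (hmeas L v)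
  have hfloor : ∀ L : ℕ, ⌊c * L⌋₊ ≤ L := fun L =>
    Nat.floor_le_of_le (mul_le_of_le_one_left (Nat.cast_nonneg L) hc.2)
  have hlln := ae_tendsto_sum_div_of_iIndepFun
    (Y := fun L v a => (ω L v a : ℝ)⁻¹ - ∫ a, (ω L v a : ℝ)⁻¹ ∂μ)
    (s := fun L => range (⌊c * L⌋₊ + 1))
    (fun L v => hasSubgaussianMGF_of_mem_Icc (a := 0) (b := 1) (hinv L v).aemeasurable
      (ae_of_all _ fun a => ⟨by positivity, Nat.cast_inv_le_one _⟩))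
    (fun L => (hindep L).comp (fun v (k : ℕ) => (k : ℝ)⁻¹ - ∫ a, (ω L v a : ℝ)⁻¹ ∂μ)
      fun _ => measurable_from_top)
    (fun L => by simpa using hfloor L)
  filter_upwards [hlln] with a ha
  have hsum := ha.add (tendsto_sum_div_integral (continuousOn_meanInv hκcont) hc)
  rw [zero_add] at hsum
  refine hsum.congr' ?_
  filter_upwards [eventually_ge_atTop 1] with L hL
  rw [← add_div, ← sum_add_distrib]
  refine congrArg (· / _) (sum_congr rfl fun v hv => ?_)
  have hvL : v ≤ L := (Nat.lt_succ_iff.mp (mem_range.mp hv)).trans (hfloor L)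
  have hy : (v / L : ℝ) ∈ Set.Icc (0 : ℝ) 1 :=
    ⟨by positivity, div_le_one_of_le₀ (by exact_mod_cast hvL) (Nat.cast_nonneg L)⟩
  rw [integral_inv_eq_meanInv (hmeas L v) (hval L v) (hdist L hL v hvL) fun j =>
    hκnonneg j _ hy, sub_add_cancel]

theorem ae_tendsto_sum_Icc_div (hκcont : ∀ j, ContinuousOn (κ j) (Set.Icc 0 1))
    (hκnonneg : ∀ j, ∀ y ∈ Set.Icc (0 : ℝ) 1, 0 ≤ κ j y)
    (hmeas : ∀ L v, Measurable (ω L v)) (hval : ∀ L v a, ω L v a ∈ Icc 1 K)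
    (hindep : ∀ L, iIndepFun (ω L) μ)
    (hdist : ∀ L, 1 ≤ L → ∀ v, v ≤ L → ∀ j : Fin K,
      μ {a | ω L v a = (j : ℕ) + 1} = ENNReal.ofReal (κ j (v / L)))
    {c : ℝ} (hc : c ∈ Set.Icc (0 : ℝ) 1) :
    ∀ᵐ a ∂μ, Tendsto (fun L : ℕ => (∑ m ∈ Icc 1 ⌊c * L⌋₊,
        ((ω L (m - 1) a : ℝ) + ω L m a) / ((ω L (m - 1) a : ℝ) * ω L m a)) / L) atTop
      (𝓝 (2 * ∫ y in 0..c, meanInv κ y)) := by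
  filter_upwards [ae_tendsto_sum_inv_div hκcont hκnonneg hmeas hval hindep hdist hc] with a ha
  refine (tendsto_sum_Icc_pred_add_div (C := 1) (fun L v => ?_) ha).congr fun L => ?_
  · rw [abs_of_nonneg (by positivity)]
    exact Nat.cast_inv_le_one _
  · have hpos : ∀ v, (ω L v a : ℝ) ≠ 0 := fun v =>
      Nat.cast_ne_zero.mpr (by have := mem_Icc.mp (hval L v a); omega)
    simp_rw [inv_add_inv (hpos _) (hpos _)]

end ProfileFunctional

theorem quenched_profile_limit_random_dof_general {Ω : Type*} [MeasureSpace Ω]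
    [IsProbabilityMeasure (ℙ : Measure Ω)]
    (K : ℕ)
    (κ : Fin K → ℝ → ℝ)
    (hκcont : ∀ j, ContinuousOn (κ j) (Set.Icc 0 1))
    (hκnonneg : ∀ j, ∀ y ∈ Set.Icc (0 : ℝ) 1, 0 ≤ κ j y)
    (hκsum : ∀ y ∈ Set.Icc (0 : ℝ) 1, ∑ j, κ j y = 1)
    (ω : ℕ → ℕ → Ω → ℕ)
    (hmeas : ∀ L v, Measurable (ω L v))
    (hval : ∀ L v a, ω L v a ∈ Finset.Icc 1 K)
    (hindep : iIndepFun (fun p : ℕ × ℕ => ω p.1 p.2) ℙ)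
    (hdist : ∀ L, 1 ≤ L → ∀ v, v ≤ L → ∀ j : Fin K,
      ℙ {a | ω L v a = (j : ℕ) + 1} = ENNReal.ofReal (κ j (v / L)))
    (x : ℝ) (hx : x ∈ Set.Icc (0 : ℝ) 1) :
    ∀ᵐ a ∂ℙ, Tendsto (fun L : ℕ =>
        (∑ m ∈ Finset.Icc 1 ⌊x * L⌋₊,
            ((ω L (m - 1) a : ℝ) + (ω L m a : ℝ)) / ((ω L (m - 1) a : ℝ) * (ω L m a : ℝ))) /
          ∑ m ∈ Finset.Icc 1 L,
            ((ω L (m - 1) a : ℝ) + (ω L m a : ℝ)) / ((ω L (m - 1) a : ℝ) * (ω L m a : ℝ)))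
      atTop
      (nhds ((∑ j : Fin K, (1 / ((j : ℝ) + 1)) * ∫ y in (0 : ℝ)..x, κ j y) /
        ∑ j : Fin K, (1 / ((j : ℝ) + 1)) * ∫ y in (0 : ℝ)..1, κ j y)) := by
  have hrow : ∀ L, iIndepFun (ω L) ℙ := fun L =>
    hindep.precomp (g := Prod.mk L) (Prod.mk_right_injective L)
  have hlim := fun c (hc : c ∈ Set.Icc (0 : ℝ) 1) =>
    ae_tendsto_sum_Icc_div hκcont hκnonneg hmeas hval hrow hdist hc
  have hint : ∀ c ∈ Set.Icc (0 : ℝ) 1, ∀ j, IntervalIntegrable (κ j) volume 0 c := fun c hc j =>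
    ((hκcont j).mono (Set.uIcc_subset_Icc (by simp) hc)).intervalIntegrable
  have hpos : 0 < ∫ y in 0..1, meanInv κ y :=
    intervalIntegral.intervalIntegral_pos_of_pos_on
      (((continuousOn_meanInv hκcont).mono
        (Set.uIcc_subset_Icc (by simp) (by simp))).intervalIntegrable)
      (fun y hy => meanInv_pos (fun j => hκnonneg j y (Set.Ioo_subset_Icc_self hy))
        (hκsum y (Set.Ioo_subset_Icc_self hy))) zero_lt_one
  have h1 : (1 : ℝ) ∈ Set.Icc (0 : ℝ) 1 := ⟨zero_le_one, le_rfl⟩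
  rw [← integral_meanInv (hint x hx), ← integral_meanInv (hint 1 h1),
    ← mul_div_mul_left _ _ two_ne_zero]
  filter_upwards [hlim x hx, hlim 1 h1] with a hxa h1a
  refine (hxa.div h1a (by positivity)).congr' ?_
  filter_upwards [eventually_ge_atTop 1] with L hL
  simp only [one_mul, Nat.floor_natCast]
  exact div_div_div_cancel_right₀ (by positivity) _ _

/-- Quenched limit of the macroscopic profile functional `𝒜^{(L)}` for the chain with
constant rate `r ≡ 1` and random independent degrees of freedom: if the degrees of
freedom `ω^{(L)}_v ∈ {1, …, K}` are independent with `ℙ(ω^{(L)}_v = i) = κ_i(v/L)`, then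
almost surely `𝒜^{(L)}(x) → (Σ_i (1/i)∫₀^x κ_i)/(Σ_i (1/i)∫₀^1 κ_i)`. Here the value
`i ∈ {1, …, K}` is encoded as `i = j + 1` with `j : Fin K`. -/
theorem quenched_profile_limit_random_dof {Ω : Type*} [MeasureSpace Ω]
    [IsProbabilityMeasure (ℙ : Measure Ω)]
    (K : ℕ) (hK : 1 ≤ K)
    (κ : Fin K → ℝ → ℝ)
    (hκcont : ∀ j, ContinuousOn (κ j) (Set.Icc 0 1))
    (hκnonneg : ∀ j, ∀ y ∈ Set.Icc (0 : ℝ) 1, 0 ≤ κ j y)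
    (hκsum : ∀ y ∈ Set.Icc (0 : ℝ) 1, ∑ j, κ j y = 1)
    (ω : ℕ → ℕ → Ω → ℕ)
    (hmeas : ∀ L v, Measurable (ω L v))
    (hval : ∀ L v a, ω L v a ∈ Finset.Icc 1 K)
    (hindep : iIndepFun (fun p : ℕ × ℕ => ω p.1 p.2) ℙ)
    (hdist : ∀ L, 1 ≤ L → ∀ v, v ≤ L → ∀ j : Fin K,
      ℙ {a | ω L v a = (j : ℕ) + 1} = ENNReal.ofReal (κ j (v / L)))
    (x : ℝ) (hx : x ∈ Set.Icc (0 : ℝ) 1) :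
    ∀ᵐ a ∂ℙ, Tendsto (fun L : ℕ =>
        (∑ m ∈ Finset.Icc 1 ⌊x * L⌋₊,
            ((ω L (m - 1) a : ℝ) + (ω L m a : ℝ)) / ((ω L (m - 1) a : ℝ) * (ω L m a : ℝ))) /
          ∑ m ∈ Finset.Icc 1 L,
            ((ω L (m - 1) a : ℝ) + (ω L m a : ℝ)) / ((ω L (m - 1) a : ℝ) * (ω L m a : ℝ)))
      atTop
      (nhds ((∑ j : Fin K, (1 / ((j : ℝ) + 1)) * ∫ y in (0 : ℝ)..x, κ j y) /
        ∑ j : Fin K, (1 / ((j : ℝ) + 1)) * ∫ y in (0 : ℝ)..1, κ j y)) :=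
  quenched_profile_limit_random_dof_general K κ hκcont hκnonneg hκsum ω hmeas hval hindep hdist x hx
end

section
/- Let L ≥ 2 be an integer, let ω : {0, …, L} → ℝ and r : {1, …, L} → ℝ be positive, let ψ(m) = (ω_{m−1}+ω_m)/(r_m ω_{m−1} ω_m), Φ̲(m) = Σ_{i=1}^m ψ(i), Φ̄(m) = Σ_{i=m+1}^L ψ(i), and S(a,b) = Φ̲(a)Φ̲(b) + Φ̄(a)Φ̄(b). Then for every 1 ≤ i ≤ L−1: (r_{i+1}/(r_i+r_{i+1})) · ∫₀¹ [p²·S(i+1,i+1) + 2p(1−p)·S(i,i+1) + (1−p)²·S(i,i)] dBeta(ω_{i+1}/2, ω_i/2; p) + (r_i/(r_i+r_{i+1})) · ∫₀¹ [p²·S(i−1,i−1) + 2p(1−p)·S(i,i−1) + (1−p)²·S(i,i)] dBeta(ω_{i−1}/2, ω_i/2; p) − S(i,i) = 2(r_{i+1}/(r_i+r_{i+1}))·ψ(i+1)² · ω_{i+1}(ω_{i+1}+2)/((ω_i+ω_{i+1})(ω_i+ω_{i+1}+2)) + 2(r_i/(r_i+r_{i+1}))·ψ(i)² · ω_{i−1}(ω_{i−1}+2)/((ω_{i−1}+ω_i)(ω_{i−1}+ω_i+2)).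 In particular this expected increment is strictly positive. (This is the drift of the functional S when the two dual particles occupy the same interior site i.) -/
/-
Under `Beta(a, b)`, `E p = a/(a+b)` and `E p² = a(a+1)/((a+b)(a+b+1))`. A jump from `i` to
`i ± 1` shifts `(Φ̲, Φ̄)` by `(d, -d)`, where `d = ±ψ` of the crossed edge, so the functional `S` at
the new configuration is quadratic in `p` and its expectation exceeds `S(i,i)` by
`2 d (Φ̲(i) - Φ̄(i)) E p + 2 d² E p²`. The linear terms of the two directions cancel because `Φ̲`
is harmonic for the single-particle walk: weighted by the jump probabilities, both
`ψ(i+1) E₊ p` and `ψ(i) E₋ p` equal `1/((r_i + r_{i+1}) ω_i)`. Only the variance terms survive.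
-/

open Real

/-- `ψ(m) = (ω_{m−1} + ω_m)/(r_m ω_{m−1} ω_m)`. -/
noncomputable def psi (ω r : ℕ → ℝ) (m : ℕ) : ℝ :=
  (ω (m - 1) + ω m) / (r m * ω (m - 1) * ω m)

/-- `Φ̲(m) = Σ_{i=1}^m ψ(i)`. -/
noncomputable def phiLow (ω r : ℕ → ℝ) (m : ℕ) : ℝ :=
  ∑ i ∈ Finset.Icc 1 m, psi ω r i

/-- `Φ̄(m) = Σ_{i=m+1}^L ψ(i)`. -/
noncomputable def phiHigh (L : ℕ) (ω r : ℕ → ℝ) (m : ℕ) : ℝ :=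
  ∑ i ∈ Finset.Icc (m + 1) L, psi ω r i

/-- `S(a,b) = Φ̲(a)Φ̲(b) + Φ̄(a)Φ̄(b)`. -/
noncomputable def Sfun (L : ℕ) (ω r : ℕ → ℝ) (a b : ℕ) : ℝ :=
  phiLow ω r a * phiLow ω r b + phiHigh L ω r a * phiHigh L ω r b

/-- Integration of `f` against the `Beta(α, β)` density on `(0,1)`. -/
noncomputable def betaInt (α β : ℝ) (f : ℝ → ℝ) : ℝ :=
  ∫ p in Set.Ioo (0 : ℝ) 1,
    (p ^ (α - 1) * (1 - p) ^ (β - 1) /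
      (Real.Gamma α * Real.Gamma β / Real.Gamma (α + β))) * f p

open MeasureTheory Set ProbabilityTheory

section BetaMoments

variable {a b : ℝ}

lemma integral_beta_kernel (ha : 0 < a) (hb : 0 < b) :
    ∫ p in Ioo (0 : ℝ) 1, p ^ (a - 1) * (1 - p) ^ (b - 1) = beta a b := by
  have hkernel : EqOn (fun p : ℝ => (p : ℂ) ^ ((a : ℂ) - 1) * (1 - (p : ℂ)) ^ ((b : ℂ) - 1))
      (fun p : ℝ => ((p ^ (a - 1) * (1 - p) ^ (b - 1) : ℝ) : ℂ)) (Ioo 0 1) := by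
    intro p hp
    dsimp only
    rw [Complex.ofReal_mul, Complex.ofReal_cpow hp.1.le, Complex.ofReal_cpow (by linarith [hp.2])]
    push_cast
    rfl
  rw [beta_eq_betaIntegralReal a b ha hb, Complex.betaIntegral,
    intervalIntegral.integral_of_le zero_le_one, integral_Ioc_eq_integral_Ioo,
    setIntegral_congr_fun measurableSet_Ioo hkernel, integral_complex_ofReal, Complex.ofReal_re]

lemma integral_beta_kernel_mul_pow (ha : 0 < a) (hb : 0 < b) (k l : ℕ) :
    ∫ p in Ioo (0 : ℝ) 1, p ^ (a - 1) * (1 - p) ^ (b - 1) * (p ^ k * (1 - p) ^ l)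
      = beta (a + k) (b + l) := by
  rw [← integral_beta_kernel (by positivity) (by positivity)]
  refine setIntegral_congr_fun measurableSet_Ioo fun p hp => ?_
  have hp₁ : 0 < 1 - p := by linarith [hp.2]
  simp only [add_sub_right_comm _ (k : ℝ), add_sub_right_comm _ (l : ℝ),
    Real.rpow_add hp.1, Real.rpow_add hp₁, Real.rpow_natCast]
  ring

lemma integrableOn_beta_kernel_mul_pow (ha : 0 < a) (hb : 0 < b) (k l : ℕ) :
    IntegrableOn (fun p : ℝ => p ^ (a - 1) * (1 - p) ^ (b - 1) * (p ^ k * (1 - p) ^ l))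
      (Ioo 0 1) :=
  Integrable.of_integral_ne_zero <| by
    rw [integral_beta_kernel_mul_pow ha hb]
    exact (beta_pos (by positivity) (by positivity)).ne'

lemma beta_add_one_left (ha : 0 < a) (hb : 0 < b) :
    beta (a + 1) b = a / (a + b) * beta a b := by
  have hab : a + b ≠ 0 := by positivity
  rw [beta, beta, add_right_comm, Real.Gamma_add_one ha.ne', Real.Gamma_add_one hab]
  field_simp

lemma beta_comm (a b : ℝ) : beta a b = beta b a := by
  rw [beta, beta, mul_comm, add_comm]

lemma beta_add_one_right (ha : 0 < a) (hb : 0 < b) :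
    beta a (b + 1) = b / (a + b) * beta a b := by
  rw [beta_comm, beta_add_one_left hb ha, beta_comm, add_comm b]

lemma betaInt_quadratic (ha : 0 < a) (hb : 0 < b) (X Y Z : ℝ) :
    betaInt a b (fun p => p ^ 2 * X + 2 * (p * (1 - p)) * Y + (1 - p) ^ 2 * Z)
      = (a * (a + 1) * X + 2 * (a * b) * Y + b * (b + 1) * Z) / ((a + b) * (a + b + 1)) := by
  have hI := integrableOn_beta_kernel_mul_pow ha hb
  have hsplit : (fun p : ℝ => p ^ (a - 1) * (1 - p) ^ (b - 1) / beta a b *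
        (p ^ 2 * X + 2 * (p * (1 - p)) * Y + (1 - p) ^ 2 * Z))
      = fun p => (X * (p ^ (a - 1) * (1 - p) ^ (b - 1) * (p ^ 2 * (1 - p) ^ 0))
          + 2 * Y * (p ^ (a - 1) * (1 - p) ^ (b - 1) * (p ^ 1 * (1 - p) ^ 1))
          + Z * (p ^ (a - 1) * (1 - p) ^ (b - 1) * (p ^ 0 * (1 - p) ^ 2))) / beta a b := by
    ext p; ring
  rw [betaInt, ← beta, hsplit, integral_div, integral_add, integral_add, integral_const_mul,
    integral_const_mul, integral_const_mul, integral_beta_kernel_mul_pow ha hb,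
    integral_beta_kernel_mul_pow ha hb, integral_beta_kernel_mul_pow ha hb]
  rotate_left
  · exact (hI 2 0).const_mul X
  · exact (hI 1 1).const_mul (2 * Y)
  · exact ((hI 2 0).const_mul X).add ((hI 1 1).const_mul (2 * Y))
  · exact (hI 0 2).const_mul Z
  push_cast
  rw [show a + 2 = a + 1 + 1 by ring, show b + 2 = b + 1 + 1 by ring, add_zero, add_zero,
    beta_add_one_left (by positivity) hb, beta_add_one_left ha hb,
    beta_add_one_left ha (by positivity), beta_add_one_right (by positivity) hb,
    beta_add_one_right ha (by positivity), beta_add_one_right ha hb]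
  have hB := beta_pos ha hb
  field_simp
  ring

end BetaMoments

lemma betaInt_half_drift {u v : ℝ} (hu : 0 < u) (hv : 0 < v) {A B A' B' d : ℝ}
    (hA : A' = A + d) (hB : B' = B - d) :
    betaInt (u / 2) (v / 2)
        (fun p => p ^ 2 * (A' * A' + B' * B') + 2 * (p * (1 - p)) * (A * A' + B * B')
          + (1 - p) ^ 2 * (A * A + B * B))
      = A * A + B * B + 2 * d * (A - B) * (u / (u + v))
          + 2 * d ^ 2 * (u * (u + 2) / ((u + v) * (u + v + 2))) := by
  rw [betaInt_quadratic (by positivity) (by positivity), hA, hB]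
  field_simp
  ring

section Chain

variable {L : ℕ} {ω r : ℕ → ℝ}

variable (ω r) in
lemma phiLow_succ (m : ℕ) : phiLow ω r (m + 1) = phiLow ω r m + psi ω r (m + 1) :=
  Finset.sum_Icc_succ_top (by omega) _

variable (ω r) in
lemma phiHigh_eq_psi_add {m : ℕ} (hm : m + 1 ≤ L) :
    phiHigh L ω r m = psi ω r (m + 1) + phiHigh L ω r (m + 1) := by
  rw [phiHigh, phiHigh, ← Finset.add_sum_Ioc_eq_sum_Icc hm, Finset.Icc_add_one_left_eq_Ioc]

lemma psi_pos {m : ℕ} (h₀ : 0 < ω (m - 1)) (h₁ : 0 < ω m) (hr : 0 < r m) : 0 < psi ω r m := by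
  unfold psi
  positivity

lemma rate_mul_psi {m : ℕ} (h₀ : ω (m - 1) ≠ 0) (h₁ : ω m ≠ 0) (hr : r m ≠ 0) :
    r m * psi ω r m = 1 / ω (m - 1) + 1 / ω m := by
  unfold psi
  field_simp
  ring

variable {i : ℕ}

lemma betaInt_Sfun_succ (hi : i + 1 ≤ L) (h₀ : 0 < ω i) (h₁ : 0 < ω (i + 1)) :
    betaInt (ω (i + 1) / 2) (ω i / 2) (fun p =>
        p ^ 2 * Sfun L ω r (i + 1) (i + 1) + 2 * (p * (1 - p)) * Sfun L ω r i (i + 1)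
          + (1 - p) ^ 2 * Sfun L ω r i i)
      = Sfun L ω r i i
          + 2 * psi ω r (i + 1) * (phiLow ω r i - phiHigh L ω r i) * (ω (i + 1) / (ω (i + 1) + ω i))
          + 2 * psi ω r (i + 1) ^ 2 *
            (ω (i + 1) * (ω (i + 1) + 2) / ((ω (i + 1) + ω i) * (ω (i + 1) + ω i + 2))) :=
  betaInt_half_drift h₁ h₀ (phiLow_succ ω r i) <| by
    linarith [phiHigh_eq_psi_add ω r hi]

lemma betaInt_Sfun_pred (hi₁ : 1 ≤ i) (hi : i ≤ L) (h₀ : 0 < ω (i - 1)) (h₁ : 0 < ω i) :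
    betaInt (ω (i - 1) / 2) (ω i / 2) (fun p =>
        p ^ 2 * Sfun L ω r (i - 1) (i - 1) + 2 * (p * (1 - p)) * Sfun L ω r i (i - 1)
          + (1 - p) ^ 2 * Sfun L ω r i i)
      = Sfun L ω r i i
          + 2 * -psi ω r i * (phiLow ω r i - phiHigh L ω r i) * (ω (i - 1) / (ω (i - 1) + ω i))
          + 2 * (-psi ω r i) ^ 2 *
            (ω (i - 1) * (ω (i - 1) + 2) / ((ω (i - 1) + ω i) * (ω (i - 1) + ω i + 2))) := by
  obtain ⟨j, rfl⟩ : ∃ j, i = j + 1 := ⟨i - 1, by omega⟩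
  simp only [Nat.add_sub_cancel] at h₀ ⊢
  refine betaInt_half_drift h₀ h₁ ?_ ?_
  · linarith [phiLow_succ ω r j]
  · linarith [phiHigh_eq_psi_add ω r hi]

lemma rate_psi_mean_balance (h₀ : 0 < ω (i - 1)) (h₁ : 0 < ω i) (h₂ : 0 < ω (i + 1))
    (hr₁ : 0 < r i) (hr₂ : 0 < r (i + 1)) :
    r (i + 1) / (r i + r (i + 1)) * (psi ω r (i + 1) * (ω (i + 1) / (ω (i + 1) + ω i)))
      = r i / (r i + r (i + 1)) * (psi ω r i * (ω (i - 1) / (ω (i - 1) + ω i))) := by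
  have h_succ := rate_mul_psi (m := i + 1) (ω := ω) (r := r) h₁.ne' h₂.ne' hr₂.ne'
  have h_self := rate_mul_psi h₀.ne' h₁.ne' hr₁.ne'
  rw [Nat.add_sub_cancel] at h_succ
  calc _ = r (i + 1) * psi ω r (i + 1) * (ω (i + 1) / (ω (i + 1) + ω i)) / (r i + r (i + 1)) := by
        ring
    _ = 1 / ω i / (r i + r (i + 1)) := by
        rw [h_succ]
        field_simp
    _ = r i * psi ω r i * (ω (i - 1) / (ω (i - 1) + ω i)) / (r i + r (i + 1)) := by
        rw [h_self]
        field_simp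
        ring
    _ = _ := by ring

end Chain

theorem drift_same_site_general (L : ℕ) (ω r : ℕ → ℝ)
    (hω : ∀ m, m ≤ L → 0 < ω m) (hr : ∀ m, 1 ≤ m → m ≤ L → 0 < r m)
    (i : ℕ) (hi1 : 1 ≤ i) (hi2 : i ≤ L - 1) :
    (r (i + 1) / (r i + r (i + 1))) *
          betaInt (ω (i + 1) / 2) (ω i / 2) (fun p =>
            p ^ 2 * Sfun L ω r (i + 1) (i + 1) +
              2 * (p * (1 - p)) * Sfun L ω r i (i + 1) +
              (1 - p) ^ 2 * Sfun L ω r i i)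
        + (r i / (r i + r (i + 1))) *
          betaInt (ω (i - 1) / 2) (ω i / 2) (fun p =>
            p ^ 2 * Sfun L ω r (i - 1) (i - 1) +
              2 * (p * (1 - p)) * Sfun L ω r i (i - 1) +
              (1 - p) ^ 2 * Sfun L ω r i i)
        - Sfun L ω r i i
      = 2 * (r (i + 1) / (r i + r (i + 1))) * (psi ω r (i + 1)) ^ 2 *
            (ω (i + 1) * (ω (i + 1) + 2) /
              ((ω i + ω (i + 1)) * (ω i + ω (i + 1) + 2)))
          + 2 * (r i / (r i + r (i + 1))) * (psi ω r i) ^ 2 *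
            (ω (i - 1) * (ω (i - 1) + 2) /
              ((ω (i - 1) + ω i) * (ω (i - 1) + ω i + 2)))
      ∧ 0 < 2 * (r (i + 1) / (r i + r (i + 1))) * (psi ω r (i + 1)) ^ 2 *
            (ω (i + 1) * (ω (i + 1) + 2) /
              ((ω i + ω (i + 1)) * (ω i + ω (i + 1) + 2)))
          + 2 * (r i / (r i + r (i + 1))) * (psi ω r i) ^ 2 *
            (ω (i - 1) * (ω (i - 1) + 2) /
              ((ω (i - 1) + ω i) * (ω (i - 1) + ω i + 2))) := by
  have hω_prev := hω (i - 1) (by omega)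
  have hω_i := hω i (by omega)
  have hω_next := hω (i + 1) (by omega)
  have hr_i := hr i hi1 (by omega)
  have hr_next := hr (i + 1) (by omega) (by omega)
  have hψ_i : 0 < psi ω r i := psi_pos hω_prev hω_i hr_i
  have hψ_next : 0 < psi ω r (i + 1) := psi_pos hω_i hω_next hr_next
  have hweights : r (i + 1) / (r i + r (i + 1)) + r i / (r i + r (i + 1)) = 1 := by
    field_simp
    ring
  refine ⟨?_, by positivity⟩
  rw [betaInt_Sfun_succ (by omega) hω_i hω_next, betaInt_Sfun_pred hi1 (by omega) hω_prev hω_i]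
  linear_combination Sfun L ω r i i * hweights
    + 2 * (phiLow ω r i - phiHigh L ω r i) *
      rate_psi_mean_balance hω_prev hω_i hω_next hr_i hr_next

/-- The drift of the two-particle functional `S` when both dual particles occupy the same
interior site `i`: the expected increment equals the stated explicit expression, and in
particular it is strictly positive. -/
theorem drift_same_site (L : ℕ) (hL : 2 ≤ L) (ω r : ℕ → ℝ)
    (hω : ∀ m, m ≤ L → 0 < ω m) (hr : ∀ m, 1 ≤ m → m ≤ L → 0 < r m)
    (i : ℕ) (hi1 : 1 ≤ i) (hi2 : i ≤ L - 1) :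
    (r (i + 1) / (r i + r (i + 1))) *
          betaInt (ω (i + 1) / 2) (ω i / 2) (fun p =>
            p ^ 2 * Sfun L ω r (i + 1) (i + 1) +
              2 * (p * (1 - p)) * Sfun L ω r i (i + 1) +
              (1 - p) ^ 2 * Sfun L ω r i i)
        + (r i / (r i + r (i + 1))) *
          betaInt (ω (i - 1) / 2) (ω i / 2) (fun p =>
            p ^ 2 * Sfun L ω r (i - 1) (i - 1) +
              2 * (p * (1 - p)) * Sfun L ω r i (i - 1) +
              (1 - p) ^ 2 * Sfun L ω r i i)
        - Sfun L ω r i i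
      = 2 * (r (i + 1) / (r i + r (i + 1))) * (psi ω r (i + 1)) ^ 2 *
            (ω (i + 1) * (ω (i + 1) + 2) /
              ((ω i + ω (i + 1)) * (ω i + ω (i + 1) + 2)))
          + 2 * (r i / (r i + r (i + 1))) * (psi ω r i) ^ 2 *
            (ω (i - 1) * (ω (i - 1) + 2) /
              ((ω (i - 1) + ω i) * (ω (i - 1) + ω i + 2)))
      ∧ 0 < 2 * (r (i + 1) / (r i + r (i + 1))) * (psi ω r (i + 1)) ^ 2 *
            (ω (i + 1) * (ω (i + 1) + 2) /
              ((ω i + ω (i + 1)) * (ω i + ω (i + 1) + 2)))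
          + 2 * (r i / (r i + r (i + 1))) * (psi ω r i) ^ 2 *
            (ω (i - 1) * (ω (i - 1) + 2) /
              ((ω (i - 1) + ω i) * (ω (i - 1) + ω i + 2))) :=
  drift_same_site_general L ω r hω hr i hi1 hi2
end

section
/- Let V be a finite set (the bulk sites), B a finite set disjoint from V (the boundary sites), E a finite set of unordered pairs of sites of V (the bulk edges) and E∂ a finite set of pairs (u, v) with u ∈ V, v ∈ B (the boundary edges); let r assign a positive rate to every edge of E ∪ E∂, let ω : V → ℤ_{>0} assign degrees of freedom, and let T : B → ℝ_{>0} assign temperatures. For configurations ξ : V → ℝ_{≥0} of energies and (n, n̂) with n : V → ℕ, n̂ : B → ℕ of particles, define the duality function F(n, n̂, ξ) = Π_{u∈V} (ξ_u^{n_u} Γ(ω_u/2)/Γ(n_u + ω_u/2)) · Π_{v∈B} T(v)^{n̂_v}. Define (G F(n, n̂, ·))(ξ) = Σ_{(u,v)∈E} r_{(u,v)} ∫₀¹ (p^{ω_u/2−1}(1−p)^{ω_v/2−1}/B(ω_u/2, ω_v/2)) [F(n, n̂, ξ') − F(n, n̂, ξ)] dp + Σ_{(u,v)∈E∂} r_{(u,v)}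 ∫₀^∞ (η^{ω_u/2−1} e^{−η/T(v)}/(T(v)^{ω_u/2} Γ(ω_u/2))) [F(n, n̂, ξ'') − F(n, n̂, ξ)] dη, where ξ' replaces (ξ_u, ξ_v) by (p(ξ_u+ξ_v), (1−p)(ξ_u+ξ_v)) and ξ'' replaces ξ_u by η. Define (A F(·, ·, ξ))(n, n̂) = Σ_{(u,v)∈E} r_{(u,v)} Σ_{k=0}^{n_u+n_v} C(n_u+n_v, k) (B(k+ω_u/2, n_u+n_v−k+ω_v/2)/B(ω_u/2, ω_v/2)) [F(n', n̂, ξ) − F(n, n̂, ξ)] + Σ_{(u,v)∈E∂} r_{(u,v)} [F(n'', n̂'', ξ) − F(n, n̂, ξ)], where n' replaces (n_u, n_v) by (k, n_u+n_v−k), and (n'', n̂'') sets n_u to 0 and increases n̂_v by n_u. Then for every ξ, n, n̂: (G F(n, n̂, ·))(ξ) = (A F(·, ·, ξ))(n, n̂). -/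
/-!
Writing `siteWeight a m x = x ^ m Γ(a) / Γ(m + a)`, the duality function is a product of site
weights with `a = ω u / 2`. Pooling two sites turns their two weights into the single weight
`siteWeight (a + b) (i + j) (x + y)` in both processes: splitting the pooled energy by a
`Beta(a, b)` fraction gives it by the Beta integral, splitting the pooled particles by the
beta-binomial law gives it by the binomial theorem. At a boundary edge, the `Gamma(a, T)` moments
`E[η ^ m] = T ^ m Γ(m + a) / Γ(a)` turn the refreshed site weight into `T ^ m`, the factor that
`m` particles absorbed at the bath contribute. Both laws being normalized, the `- F` terms match.
-/

open Real MeasureTheory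

/-- The duality function
`F(n, n̂, ξ) = Π_{u∈V} ξ_u^{n_u} Γ(ω_u/2)/Γ(n_u + ω_u/2) · Π_{v∈B} T(v)^{n̂_v}`. -/
noncomputable def dualityF {V Bd : Type*} [Fintype V] [Fintype Bd]
    (ω : V → ℕ) (T : Bd → ℝ) (n : V → ℕ) (nh : Bd → ℕ) (ξ : V → ℝ) : ℝ :=
  (∏ u, ξ u ^ n u * Real.Gamma ((ω u : ℝ) / 2) / Real.Gamma ((n u : ℝ) + (ω u : ℝ) / 2)) *
    ∏ v, T v ^ nh v

/-- The energy configuration `ξ'` obtained from `ξ` by pooling the energies at `u`, `v`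
and giving the fraction `p` to `u` and `1 − p` to `v`. -/
def energyUpdate {V : Type*} [DecidableEq V] (ξ : V → ℝ) (u v : V) (p : ℝ) : V → ℝ :=
  fun w => if w = u then p * (ξ u + ξ v) else if w = v then (1 - p) * (ξ u + ξ v) else ξ w

/-- The particle configuration `n'` obtained from `n` by pooling the particles at `u`,
`v` and placing `k` of them at `u` and the rest at `v`. -/
def particleUpdate {V : Type*} [DecidableEq V] (n : V → ℕ) (u v : V) (k : ℕ) : V → ℕ :=
  fun w => if w = u then k else if w = v then n u + n v - k else n w

open Finset

lemma rpow_natCast_add_sub_one {x : ℝ} (hx : 0 < x) (m : ℕ) (a : ℝ) :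
    x ^ ((m : ℝ) + a - 1) = x ^ m * x ^ (a - 1) := by
  rw [add_sub_assoc, add_comm, rpow_add_natCast hx.ne', mul_comm]

lemma integral_mul_sub_of_integral_eq_one {α : Type*} [MeasurableSpace α] {μ : Measure α}
    {ρ g : α → ℝ} (hρ : Integrable ρ μ) (hρg : Integrable (fun x => ρ x * g x) μ)
    (hρ_one : ∫ x, ρ x ∂μ = 1) (K c : ℝ) :
    ∫ x, ρ x * (g x * K - c) ∂μ = (∫ x, ρ x * g x ∂μ) * K - c := by
  have hsplit : (fun x => ρ x * (g x * K - c)) = fun x => ρ x * g x * K - ρ x * c := by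
    ext x; ring
  rw [hsplit, integral_sub (hρg.mul_const K) (hρ.mul_const c), integral_mul_const,
    integral_mul_const, hρ_one, one_mul]

lemma sum_mul_sub_of_sum_eq_one {ι : Type*} {s : Finset ι} {w g : ι → ℝ}
    (hw_one : ∑ k ∈ s, w k = 1) (K c : ℝ) :
    ∑ k ∈ s, w k * (g k * K - c) = (∑ k ∈ s, w k * g k) * K - c := by
  simp only [mul_sub, ← mul_assoc, sum_sub_distrib, ← sum_mul, hw_one, one_mul]

section Products

variable {ι M : Type*} [Fintype ι] [DecidableEq ι] [CommMonoid M]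

lemma prod_eq_mul_prod_erase_of_forall_ne {f g : ι → M} (u : ι) (h : ∀ w ≠ u, g w = f w) :
    ∏ w, g w = g u * ∏ w ∈ univ.erase u, f w := by
  rw [← mul_prod_erase univ g (mem_univ u)]
  exact congrArg _ (prod_congr rfl fun w hw => h w (ne_of_mem_erase hw))

lemma prod_eq_mul_mul_prod_erase_erase_of_forall_ne {f g : ι → M} {u v : ι} (huv : u ≠ v)
    (h : ∀ w, w ≠ u → w ≠ v → g w = f w) :
    ∏ w, g w = g u * g v * ∏ w ∈ (univ.erase u).erase v, f w := by
  rw [← mul_prod_erase univ g (mem_univ u),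
    ← mul_prod_erase _ g (mem_erase.2 ⟨huv.symm, mem_univ v⟩), ← mul_assoc]
  exact congrArg _ (prod_congr rfl fun w hw =>
    h w (ne_of_mem_erase (mem_of_mem_erase hw)) (ne_of_mem_erase hw))

lemma prod_pow_update_add (T : ι → M) (nh : ι → ℕ) (v : ι) (m : ℕ) :
    ∏ w, T w ^ Function.update nh v (nh v + m) w = T v ^ m * ∏ w, T w ^ nh w := by
  rw [prod_eq_mul_prod_erase_of_forall_ne v fun w hw => by rw [Function.update_of_ne hw],
    ← mul_prod_erase univ (fun w => T w ^ nh w) (mem_univ v), Function.update_self, pow_add,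
    mul_comm (T v ^ nh v), mul_assoc]

end Products

lemma betaFn_pos {a b : ℝ} (ha : 0 < a) (hb : 0 < b) : 0 < betaFn a b :=
  ProbabilityTheory.beta_pos ha hb

section BetaIntegral

variable {a b : ℝ}

lemma integral_rpow_mul_one_sub_rpow (ha : 0 < a) (hb : 0 < b) :
    ∫ p in Set.Ioo (0 : ℝ) 1, p ^ (a - 1) * (1 - p) ^ (b - 1) = betaFn a b := by
  have hcomplex : Complex.betaIntegral a b
      = ((∫ p in Set.Ioo (0 : ℝ) 1, p ^ (a - 1) * (1 - p) ^ (b - 1) : ℝ) : ℂ) := by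
    rw [Complex.betaIntegral, ← integral_Ioc_eq_integral_Ioo,
      ← intervalIntegral.integral_of_le zero_le_one, ← intervalIntegral.integral_ofReal]
    refine intervalIntegral.integral_congr fun x hx => ?_
    rw [Set.uIcc_of_le zero_le_one] at hx
    rw [Complex.ofReal_mul, Complex.ofReal_cpow hx.1, Complex.ofReal_cpow (sub_nonneg.2 hx.2)]
    push_cast
    ring
  have h := Complex.Gamma_mul_Gamma_eq_betaIntegral
    (s := (a : ℂ)) (t := (b : ℂ)) (by simpa using ha) (by simpa using hb)
  rw [hcomplex, ← Complex.ofReal_add, Complex.Gamma_ofReal, Complex.Gamma_ofReal,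
    Complex.Gamma_ofReal, ← Complex.ofReal_mul, ← Complex.ofReal_mul, Complex.ofReal_inj] at h
  rw [betaFn, h, mul_div_cancel_left₀ _ (Gamma_pos_of_pos (add_pos ha hb)).ne']

lemma integrableOn_rpow_mul_one_sub_rpow (ha : 0 < a) (hb : 0 < b) :
    IntegrableOn (fun p : ℝ => p ^ (a - 1) * (1 - p) ^ (b - 1)) (Set.Ioo 0 1) := by
  have h : IntegrableOn
      (fun x : ℝ => ((x : ℂ) ^ ((a : ℂ) - 1) * (1 - (x : ℂ)) ^ ((b : ℂ) - 1)).re)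
      (Set.Ioo 0 1) :=
    ((Complex.betaIntegral_convergent (u := (a : ℂ)) (v := (b : ℂ))
      (by simpa using ha) (by simpa using hb)).1.mono_set Set.Ioo_subset_Ioc_self).re
  refine h.congr_fun (fun x hx => ?_) measurableSet_Ioo
  simp only [← Complex.ofReal_one, ← Complex.ofReal_sub, ← Complex.ofReal_cpow hx.1.le,
    ← Complex.ofReal_cpow (sub_nonneg.2 hx.2.le), ← Complex.ofReal_mul, Complex.ofReal_re]

lemma sum_choose_mul_betaFn (ha : 0 < a) (hb : 0 < b) (N : ℕ) :
    ∑ k ∈ range (N + 1), (N.choose k : ℝ) * betaFn ((k : ℝ) + a) (((N - k : ℕ) : ℝ) + b)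
      = betaFn a b := by
  have hterm : ∀ k : ℕ, (N.choose k : ℝ) * betaFn ((k : ℝ) + a) (((N - k : ℕ) : ℝ) + b)
      = ∫ p in Set.Ioo (0 : ℝ) 1, (N.choose k : ℝ)
          * (p ^ ((k : ℝ) + a - 1) * (1 - p) ^ (((N - k : ℕ) : ℝ) + b - 1)) :=
    fun k => by
      rw [integral_const_mul, integral_rpow_mul_one_sub_rpow (by positivity) (by positivity)]
  simp_rw [hterm]
  rw [← integral_finsetSum _ fun k _ =>
      (integrableOn_rpow_mul_one_sub_rpow (by positivity) (by positivity)).const_mul _,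
    ← integral_rpow_mul_one_sub_rpow ha hb]
  refine setIntegral_congr_fun measurableSet_Ioo fun p hp => ?_
  simp only [rpow_natCast_add_sub_one hp.1, rpow_natCast_add_sub_one (sub_pos.2 hp.2)]
  calc ∑ k ∈ range (N + 1),
        (N.choose k : ℝ) * (p ^ k * p ^ (a - 1) * ((1 - p) ^ (N - k) * (1 - p) ^ (b - 1)))
      = (∑ k ∈ range (N + 1), p ^ k * (1 - p) ^ (N - k) * (N.choose k : ℝ))
          * (p ^ (a - 1) * (1 - p) ^ (b - 1)) := by
        rw [sum_mul]
        exact sum_congr rfl fun k _ => by ring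
    _ = p ^ (a - 1) * (1 - p) ^ (b - 1) := by
        rw [← add_pow, add_sub_cancel, one_pow, one_mul]

lemma integrableOn_betaDensity (ha : 0 < a) (hb : 0 < b) :
    IntegrableOn (fun p => p ^ (a - 1) * (1 - p) ^ (b - 1) / betaFn a b) (Set.Ioo 0 1) :=
  (integrableOn_rpow_mul_one_sub_rpow ha hb).div_const _

lemma integral_betaDensity_eq_one (ha : 0 < a) (hb : 0 < b) :
    ∫ p in Set.Ioo (0 : ℝ) 1, p ^ (a - 1) * (1 - p) ^ (b - 1) / betaFn a b = 1 := by
  rw [integral_div, integral_rpow_mul_one_sub_rpow ha hb, div_self (betaFn_pos ha hb).ne']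

lemma sum_betaBinomial_eq_one (ha : 0 < a) (hb : 0 < b) (N : ℕ) :
    ∑ k ∈ range (N + 1), (N.choose k : ℝ)
        * (betaFn ((k : ℝ) + a) (((N - k : ℕ) : ℝ) + b) / betaFn a b) = 1 := by
  simp_rw [← mul_div_assoc]
  rw [← sum_div, sum_choose_mul_betaFn ha hb, div_self (betaFn_pos ha hb).ne']

end BetaIntegral

section GammaIntegral

variable {a θ : ℝ}

lemma integral_rpow_mul_exp_neg_div (ha : 0 < a) (hθ : 0 < θ) :
    ∫ η in Set.Ioi (0 : ℝ), η ^ (a - 1) * exp (-η / θ) = θ ^ a * Gamma a := by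
  rw [← one_div_one_div θ, ← integral_rpow_mul_exp_neg_mul_Ioi ha (one_div_pos.2 hθ)]
  refine setIntegral_congr_fun measurableSet_Ioi fun η _ => ?_
  rw [one_div_one_div, neg_div, div_eq_inv_mul, one_div]

lemma integrableOn_rpow_mul_exp_neg_div (ha : 0 < a) (hθ : 0 < θ) :
    IntegrableOn (fun η : ℝ => η ^ (a - 1) * exp (-η / θ)) (Set.Ioi 0) := by
  refine (integrableOn_rpow_mul_exp_neg_mul_rpow (s := a - 1) (p := 1) (by linarith) zero_lt_one
    (inv_pos.2 hθ)).congr_fun (fun η _ => ?_) measurableSet_Ioi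
  simp only [rpow_one, div_eq_inv_mul, neg_mul, mul_neg]

lemma integrableOn_gammaDensity (ha : 0 < a) (hθ : 0 < θ) :
    IntegrableOn (fun η => η ^ (a - 1) * exp (-η / θ) / (θ ^ a * Gamma a)) (Set.Ioi 0) :=
  (integrableOn_rpow_mul_exp_neg_div ha hθ).div_const _

lemma integral_gammaDensity_eq_one (ha : 0 < a) (hθ : 0 < θ) :
    ∫ η in Set.Ioi (0 : ℝ), η ^ (a - 1) * exp (-η / θ) / (θ ^ a * Gamma a) = 1 := by
  rw [integral_div, integral_rpow_mul_exp_neg_div ha hθ,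
    div_self (mul_pos (rpow_pos_of_pos hθ a) (Gamma_pos_of_pos ha)).ne']

end GammaIntegral

noncomputable def siteWeight (a : ℝ) (m : ℕ) (x : ℝ) : ℝ := x ^ m * Gamma a / Gamma (m + a)

section SiteWeight

variable {a b : ℝ}

lemma siteWeight_zero (ha : 0 < a) (x : ℝ) : siteWeight a 0 x = 1 := by
  rw [siteWeight, pow_zero, one_mul, Nat.cast_zero, zero_add, div_self (Gamma_pos_of_pos ha).ne']

lemma siteWeight_mul_left (c : ℝ) (m : ℕ) (x : ℝ) :
    siteWeight a m (c * x) = c ^ m * siteWeight a m x := by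
  simp only [siteWeight, mul_pow, mul_div_assoc, mul_assoc]

lemma betaFn_div_mul_siteWeight_mul_siteWeight (ha : 0 < a) (hb : 0 < b) (i j : ℕ) (x y : ℝ) :
    betaFn (i + a) (j + b) / betaFn a b * (siteWeight a i x * siteWeight b j y)
      = x ^ i * y ^ j * (Gamma (a + b) / Gamma ((i + j : ℕ) + (a + b))) := by
  have hia := (Gamma_pos_of_pos (by positivity : 0 < (i : ℝ) + a)).ne'
  have hjb := (Gamma_pos_of_pos (by positivity : 0 < (j : ℝ) + b)).ne'
  have hN : (i : ℝ) + a + (j + b) = (i + j : ℕ) + (a + b) := by push_cast; ring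
  have := (Gamma_pos_of_pos ha).ne'
  have := (Gamma_pos_of_pos hb).ne'
  have := (Gamma_pos_of_pos (add_pos ha hb)).ne'
  have := (Gamma_pos_of_pos (by positivity : 0 < ((i + j : ℕ) : ℝ) + (a + b))).ne'
  rw [betaFn, betaFn, siteWeight, siteWeight, hN]
  field_simp

lemma betaDensity_mul_siteWeight_mul_siteWeight {p : ℝ} (hp : p ∈ Set.Ioo (0 : ℝ) 1)
    (i j : ℕ) (s : ℝ) :
    p ^ (a - 1) * (1 - p) ^ (b - 1) / betaFn a b
        * (siteWeight a i (p * s) * siteWeight b j ((1 - p) * s))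
      = p ^ ((i : ℝ) + a - 1) * (1 - p) ^ ((j : ℝ) + b - 1)
        * (siteWeight a i s * siteWeight b j s / betaFn a b) := by
  rw [siteWeight_mul_left, siteWeight_mul_left, rpow_natCast_add_sub_one hp.1,
    rpow_natCast_add_sub_one (sub_pos.2 hp.2)]
  ring

lemma integrableOn_betaDensity_mul_siteWeight (ha : 0 < a) (hb : 0 < b) (i j : ℕ) (s : ℝ) :
    IntegrableOn (fun p => p ^ (a - 1) * (1 - p) ^ (b - 1) / betaFn a b
        * (siteWeight a i (p * s) * siteWeight b j ((1 - p) * s))) (Set.Ioo 0 1) :=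
  IntegrableOn.congr_fun
    ((integrableOn_rpow_mul_one_sub_rpow (by positivity) (by positivity)).mul_const _)
    (fun _ hp => (betaDensity_mul_siteWeight_mul_siteWeight hp i j s).symm) measurableSet_Ioo

lemma integral_betaDensity_mul_siteWeight (ha : 0 < a) (hb : 0 < b) (i j : ℕ) (s : ℝ) :
    ∫ p in Set.Ioo (0 : ℝ) 1, p ^ (a - 1) * (1 - p) ^ (b - 1) / betaFn a b
        * (siteWeight a i (p * s) * siteWeight b j ((1 - p) * s))
      = siteWeight (a + b) (i + j) s := by
  rw [setIntegral_congr_fun measurableSet_Ioo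
      (fun _ hp => betaDensity_mul_siteWeight_mul_siteWeight hp i j s),
    integral_mul_const, integral_rpow_mul_one_sub_rpow (by positivity) (by positivity),
    ← mul_div_assoc, mul_div_right_comm, betaFn_div_mul_siteWeight_mul_siteWeight ha hb,
    siteWeight, pow_add]
  ring

lemma sum_betaBinomial_mul_siteWeight (ha : 0 < a) (hb : 0 < b) (N : ℕ) (x y : ℝ) :
    ∑ k ∈ range (N + 1), (N.choose k : ℝ)
        * (betaFn ((k : ℝ) + a) (((N - k : ℕ) : ℝ) + b) / betaFn a b)
        * (siteWeight a k x * siteWeight b (N - k) y)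
      = siteWeight (a + b) N (x + y) := by
  have hterm : ∀ k ∈ range (N + 1), (N.choose k : ℝ)
        * (betaFn ((k : ℝ) + a) (((N - k : ℕ) : ℝ) + b) / betaFn a b)
        * (siteWeight a k x * siteWeight b (N - k) y)
      = x ^ k * y ^ (N - k) * N.choose k * (Gamma (a + b) / Gamma (N + (a + b))) := by
    intro k hk
    rw [mul_assoc, betaFn_div_mul_siteWeight_mul_siteWeight ha hb,
      Nat.add_sub_cancel' (Nat.lt_succ_iff.1 (mem_range.1 hk))]
    ring
  rw [sum_congr rfl hterm, ← sum_mul, ← add_pow, siteWeight, mul_div_assoc]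

lemma gammaDensity_mul_siteWeight {θ η : ℝ} (hη : 0 < η) (ha : 0 < a) (hθ : 0 < θ)
    (m : ℕ) :
    η ^ (a - 1) * exp (-η / θ) / (θ ^ a * Gamma a) * siteWeight a m η
      = η ^ ((m : ℝ) + a - 1) * exp (-η / θ) / (θ ^ a * Gamma ((m : ℝ) + a)) := by
  have := (Gamma_pos_of_pos ha).ne'
  have := (rpow_pos_of_pos hθ a).ne'
  rw [siteWeight, rpow_natCast_add_sub_one hη]
  field_simp

lemma integrableOn_gammaDensity_mul_siteWeight {θ : ℝ} (ha : 0 < a) (hθ : 0 < θ) (m : ℕ) :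
    IntegrableOn (fun η => η ^ (a - 1) * exp (-η / θ) / (θ ^ a * Gamma a) * siteWeight a m η)
      (Set.Ioi 0) :=
  IntegrableOn.congr_fun ((integrableOn_rpow_mul_exp_neg_div (by positivity) hθ).div_const _)
    (fun _ hη => (gammaDensity_mul_siteWeight hη ha hθ m).symm) measurableSet_Ioi

lemma integral_gammaDensity_mul_siteWeight {θ : ℝ} (ha : 0 < a) (hθ : 0 < θ) (m : ℕ) :
    ∫ η in Set.Ioi (0 : ℝ),
        η ^ (a - 1) * exp (-η / θ) / (θ ^ a * Gamma a) * siteWeight a m η = θ ^ m := by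
  have := (Gamma_pos_of_pos (by positivity : 0 < (m : ℝ) + a)).ne'
  have := (rpow_pos_of_pos hθ a).ne'
  rw [setIntegral_congr_fun measurableSet_Ioi
      (fun _ hη => gammaDensity_mul_siteWeight hη ha hθ m),
    integral_div, integral_rpow_mul_exp_neg_div (by positivity) hθ, add_comm (m : ℝ),
    rpow_add_natCast hθ.ne']
  field_simp

end SiteWeight

section DualityFunction

variable {V Bd : Type*} [Fintype V] [DecidableEq V] [Fintype Bd]
  (ω : V → ℕ) (T : Bd → ℝ) (n : V → ℕ) (nh : Bd → ℕ) (ξ : V → ℝ)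
  {n' : V → ℕ} {ξ' : V → ℝ}

omit [DecidableEq V] in
lemma dualityF_eq_prod_siteWeight :
    dualityF ω T n nh ξ = (∏ u, siteWeight (ω u / 2) (n u) (ξ u)) * ∏ v, T v ^ nh v :=
  rfl

lemma dualityF_eq_siteWeight_mul_of_forall_ne (u : V)
    (hn : ∀ w ≠ u, n' w = n w) (hξ : ∀ w ≠ u, ξ' w = ξ w) :
    dualityF ω T n' nh ξ' = siteWeight (ω u / 2) (n' u) (ξ' u)
      * ((∏ w ∈ univ.erase u, siteWeight (ω w / 2) (n w) (ξ w)) * ∏ v, T v ^ nh v) := by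
  rw [dualityF_eq_prod_siteWeight, prod_eq_mul_prod_erase_of_forall_ne u
    fun w hw => by rw [hn w hw, hξ w hw], mul_assoc]

lemma dualityF_eq_siteWeight_mul_siteWeight_mul_of_forall_ne {u v : V}
    (huv : u ≠ v) (hn : ∀ w, w ≠ u → w ≠ v → n' w = n w)
    (hξ : ∀ w, w ≠ u → w ≠ v → ξ' w = ξ w) :
    dualityF ω T n' nh ξ' = siteWeight (ω u / 2) (n' u) (ξ' u)
      * siteWeight (ω v / 2) (n' v) (ξ' v)
      * ((∏ w ∈ (univ.erase u).erase v, siteWeight (ω w / 2) (n w) (ξ w))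
        * ∏ v, T v ^ nh v) := by
  rw [dualityF_eq_prod_siteWeight, prod_eq_mul_mul_prod_erase_erase_of_forall_ne huv
    fun w hwu hwv => by rw [hn w hwu hwv, hξ w hwu hwv], mul_assoc]

end DualityFunction

section Edges

variable {V Bd : Type*} [Fintype V] [DecidableEq V] [Fintype Bd]
  (ω : V → ℕ) (T : Bd → ℝ) (n : V → ℕ) (nh : Bd → ℕ) (ξ : V → ℝ)

lemma bulk_edge_duality (hω : ∀ u, 0 < ω u) {u v : V} (huv : u ≠ v) :
    ∫ p in Set.Ioo (0 : ℝ) 1,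
        (p ^ ((ω u : ℝ) / 2 - 1) * (1 - p) ^ ((ω v : ℝ) / 2 - 1) /
          betaFn ((ω u : ℝ) / 2) ((ω v : ℝ) / 2)) *
        (dualityF ω T n nh (energyUpdate ξ u v p) - dualityF ω T n nh ξ)
    = ∑ k ∈ range (n u + n v + 1),
        ((n u + n v).choose k : ℝ) *
          (betaFn ((k : ℝ) + (ω u : ℝ) / 2)
              (((n u + n v - k : ℕ) : ℝ) + (ω v : ℝ) / 2) /
            betaFn ((ω u : ℝ) / 2) ((ω v : ℝ) / 2)) *
        (dualityF ω T (particleUpdate n u v k) nh ξ - dualityF ω T n nh ξ) := by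
  have ha : 0 < (ω u : ℝ) / 2 := by have := hω u; positivity
  have hb : 0 < (ω v : ℝ) / 2 := by have := hω v; positivity
  have h_energy (p : ℝ) :=
    dualityF_eq_siteWeight_mul_siteWeight_mul_of_forall_ne ω T n nh ξ huv
      (n' := n) (ξ' := energyUpdate ξ u v p)
      (fun _ _ _ => rfl) (fun w hwu hwv => by simp [energyUpdate, hwu, hwv])
  have h_particle (k : ℕ) :=
    dualityF_eq_siteWeight_mul_siteWeight_mul_of_forall_ne ω T n nh ξ huv
      (n' := particleUpdate n u v k) (ξ' := ξ)
      (fun w hwu hwv => by simp [particleUpdate, hwu, hwv]) (fun _ _ _ => rfl)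
  simp only [energyUpdate, particleUpdate, if_pos, if_neg huv.symm] at h_energy h_particle
  simp_rw [h_energy, h_particle]
  rw [integral_mul_sub_of_integral_eq_one (integrableOn_betaDensity ha hb)
      (integrableOn_betaDensity_mul_siteWeight ha hb _ _ _) (integral_betaDensity_eq_one ha hb),
    sum_mul_sub_of_sum_eq_one (sum_betaBinomial_eq_one ha hb _),
    integral_betaDensity_mul_siteWeight ha hb, sum_betaBinomial_mul_siteWeight ha hb]

lemma boundary_edge_duality [DecidableEq Bd] (hω : ∀ u, 0 < ω u) (hT : ∀ v, 0 < T v)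
    (u : V) (v : Bd) :
    ∫ η in Set.Ioi (0 : ℝ),
        (η ^ ((ω u : ℝ) / 2 - 1) * exp (-η / T v) /
          (T v ^ ((ω u : ℝ) / 2) * Gamma ((ω u : ℝ) / 2))) *
        (dualityF ω T n nh (Function.update ξ u η) - dualityF ω T n nh ξ)
      = dualityF ω T (Function.update n u 0) (Function.update nh v (nh v + n u)) ξ
        - dualityF ω T n nh ξ := by
  have ha : 0 < (ω u : ℝ) / 2 := by have := hω u; positivity
  have h_energy (η : ℝ) := dualityF_eq_siteWeight_mul_of_forall_ne ω T n nh ξ u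
    (n' := n) (ξ' := Function.update ξ u η) (fun _ _ => rfl)
    (fun w hw => Function.update_of_ne hw _ _)
  have h_particle := dualityF_eq_siteWeight_mul_of_forall_ne ω T n
    (Function.update nh v (nh v + n u)) ξ u (n' := Function.update n u 0) (ξ' := ξ)
    (fun w hw => Function.update_of_ne hw _ _) (fun _ _ => rfl)
  simp only [Function.update_self] at h_energy h_particle
  simp_rw [h_energy]
  rw [integral_mul_sub_of_integral_eq_one (integrableOn_gammaDensity ha (hT v))
      (integrableOn_gammaDensity_mul_siteWeight ha (hT v) _)
      (integral_gammaDensity_eq_one ha (hT v)),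
    integral_gammaDensity_mul_siteWeight ha (hT v), h_particle, siteWeight_zero ha,
    prod_pow_update_add]
  ring

end Edges

theorem generator_duality_general {V Bd : Type*}
    [Fintype V] [DecidableEq V] [Fintype Bd] [DecidableEq Bd]
    (E : Finset (V × V)) (Ebd : Finset (V × Bd))
    (rE : V × V → ℝ) (rBd : V × Bd → ℝ)
    (ω : V → ℕ) (T : Bd → ℝ)
    (hE : ∀ e ∈ E, 0 < rE e ∧ e.1 ≠ e.2)
    (hω : ∀ u, 0 < ω u) (hT : ∀ v, 0 < T v)
    (ξ : V → ℝ)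
    (n : V → ℕ) (nh : Bd → ℕ) :
    -- `(G F(n, n̂, ·))(ξ)` :
    (∑ e ∈ E, rE e *
        ∫ p in Set.Ioo (0 : ℝ) 1,
          (p ^ ((ω e.1 : ℝ) / 2 - 1) * (1 - p) ^ ((ω e.2 : ℝ) / 2 - 1) /
              betaFn ((ω e.1 : ℝ) / 2) ((ω e.2 : ℝ) / 2)) *
            (dualityF ω T n nh (energyUpdate ξ e.1 e.2 p) - dualityF ω T n nh ξ))
      + ∑ e ∈ Ebd, rBd e *
          ∫ η in Set.Ioi (0 : ℝ),
            (η ^ ((ω e.1 : ℝ) / 2 - 1) * Real.exp (-η / T e.2) /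
                (T e.2 ^ ((ω e.1 : ℝ) / 2) * Real.Gamma ((ω e.1 : ℝ) / 2))) *
              (dualityF ω T n nh (Function.update ξ e.1 η) - dualityF ω T n nh ξ)
    =
    -- `(A F(·, ·, ξ))(n, n̂)` :
    (∑ e ∈ E, rE e *
        ∑ k ∈ Finset.range (n e.1 + n e.2 + 1),
          ((n e.1 + n e.2).choose k : ℝ) *
            (betaFn ((k : ℝ) + (ω e.1 : ℝ) / 2)
                (((n e.1 + n e.2 - k : ℕ) : ℝ) + (ω e.2 : ℝ) / 2) /
              betaFn ((ω e.1 : ℝ) / 2) ((ω e.2 : ℝ) / 2)) *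
            (dualityF ω T (particleUpdate n e.1 e.2 k) nh ξ - dualityF ω T n nh ξ))
      + ∑ e ∈ Ebd, rBd e *
          (dualityF ω T (Function.update n e.1 0)
              (Function.update nh e.2 (nh e.2 + n e.1)) ξ
            - dualityF ω T n nh ξ) := by
  congr 1
  · exact sum_congr rfl fun e he => by rw [bulk_edge_duality ω T n nh ξ hω (hE e he).2]
  · exact sum_congr rfl fun e _ => by rw [boundary_edge_duality ω T n nh ξ hω hT e.1 e.2]

/-- The duality identity `G F = A F` between the generator `G` of the inhomogeneous
energy-exchange process and the generator `A` of the dual particle process, applied to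
the duality function `F`. -/
theorem generator_duality {V Bd : Type*}
    [Fintype V] [DecidableEq V] [Fintype Bd] [DecidableEq Bd]
    (E : Finset (V × V)) (Ebd : Finset (V × Bd))
    (rE : V × V → ℝ) (rBd : V × Bd → ℝ)
    (ω : V → ℕ) (T : Bd → ℝ)
    (hE : ∀ e ∈ E, 0 < rE e ∧ e.1 ≠ e.2)
    (hEbd : ∀ e ∈ Ebd, 0 < rBd e)
    (hω : ∀ u, 0 < ω u) (hT : ∀ v, 0 < T v)
    (ξ : V → ℝ) (hξ : ∀ u, 0 ≤ ξ u)
    (n : V → ℕ) (nh : Bd → ℕ) :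
    -- `(G F(n, n̂, ·))(ξ)` :
    (∑ e ∈ E, rE e *
        ∫ p in Set.Ioo (0 : ℝ) 1,
          (p ^ ((ω e.1 : ℝ) / 2 - 1) * (1 - p) ^ ((ω e.2 : ℝ) / 2 - 1) /
              betaFn ((ω e.1 : ℝ) / 2) ((ω e.2 : ℝ) / 2)) *
            (dualityF ω T n nh (energyUpdate ξ e.1 e.2 p) - dualityF ω T n nh ξ))
      + ∑ e ∈ Ebd, rBd e *
          ∫ η in Set.Ioi (0 : ℝ),
            (η ^ ((ω e.1 : ℝ) / 2 - 1) * Real.exp (-η / T e.2) /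
                (T e.2 ^ ((ω e.1 : ℝ) / 2) * Real.Gamma ((ω e.1 : ℝ) / 2))) *
              (dualityF ω T n nh (Function.update ξ e.1 η) - dualityF ω T n nh ξ)
    =
    -- `(A F(·, ·, ξ))(n, n̂)` :
    (∑ e ∈ E, rE e *
        ∑ k ∈ Finset.range (n e.1 + n e.2 + 1),
          ((n e.1 + n e.2).choose k : ℝ) *
            (betaFn ((k : ℝ) + (ω e.1 : ℝ) / 2)
                (((n e.1 + n e.2 - k : ℕ) : ℝ) + (ω e.2 : ℝ) / 2) /
              betaFn ((ω e.1 : ℝ) / 2) ((ω e.2 : ℝ) / 2)) *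
            (dualityF ω T (particleUpdate n e.1 e.2 k) nh ξ - dualityF ω T n nh ξ))
      + ∑ e ∈ Ebd, rBd e *
          (dualityF ω T (Function.update n e.1 0)
              (Function.update nh e.2 (nh e.2 + n e.1)) ξ
            - dualityF ω T n nh ξ) :=
  generator_duality_general E Ebd rE rBd ω T hE hω hT ξ n nh
end
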